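/- arXiv:1705.10464 — 11 statements merged into one kernel-verified Lean document; each statement's English description precedes it below -/
import Mathlib

section
/- Consider the (1,m)-polynomial code: given pairwise distinct x_0,…,x_{N−1} ∈ F with N ≥ mn, worker i stores Ã_i = Σ_{j=0}^{m−1} A_j x_i^j and B̃_i = Σ_{k=0}^{n−1} B_k x_i^{km} and returns C̃_i = Ã_i^T B̃_i. Then this computation strategy is mn-recoverable: for every subset S ⊆ {0,…,N−1} with |S| = mn there exists a decoding function D_S such that D_S((C̃_i)_{i∈S}) = A^T B for all inputs A, B. Equivalently, whenever two input pairs (A,B) and (A',B') produce C̃_i = C̃'_i for all i ∈ S, all block products satisfy A_j^T B_k = A'_j^T B'_k, and hence A^T B = A'^T B'. -/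
open Matrix BigOperators

/-- the (1,m)-polynomial code is `mn`-recoverable: for every subset `S`
of the `N` workers with `|S| = mn` there is a decoding function recovering all the
block products `Aⱼᵀ Bₖ` (equivalently, `Aᵀ B`) from the workers' results `C̃ᵢ`. -/
theorem polynomial_code_mn_recoverable {F : Type*} [Field F] {s p u m n N : ℕ}
    (hm : 0 < m) (hn : 0 < n) (hN : m * n ≤ N)
    (x : Fin N → F) (hx : Function.Injective x) :
    ∀ S : Finset (Fin N), S.card = m * n →
      ∃ D : ({i : Fin N // i ∈ S} → Matrix (Fin p) (Fin u) F) →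
            (Fin m → Fin n → Matrix (Fin p) (Fin u) F),
        ∀ (A : Fin m → Matrix (Fin s) (Fin p) F) (B : Fin n → Matrix (Fin s) (Fin u) F),
          D (fun i => (∑ j : Fin m, x i.1 ^ (j : ℕ) • A j)ᵀ *
                      (∑ k : Fin n, x i.1 ^ ((k : ℕ) * m) • B k))
            = fun j k => (A j)ᵀ * B k := by
  intro S hS
  have e : {i : Fin N // i ∈ S} ≃ Fin (m * n) := S.equivFinOfCardEq hS
  set y : Fin (m * n) → F := fun a => x (e.symm a).1 with hy_def
  have hy : Function.Injective y := by
    intro a b h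
    exact e.symm.injective (Subtype.ext (hx h))
  set V : Matrix (Fin (m*n)) (Fin (m*n)) F := Matrix.vandermonde y with hV
  have hVdet : IsUnit V.det := by
    rw [hV, Matrix.det_vandermonde, isUnit_iff_ne_zero]
    refine Finset.prod_ne_zero_iff.2 fun i _ => Finset.prod_ne_zero_iff.2 fun j hj => ?_
    have hne : j ≠ i := (Finset.mem_Ioi.1 hj).ne'
    exact sub_ne_zero.2 fun h => hne (hy h)
  have hVinv : V⁻¹ * V = 1 := Matrix.nonsing_inv_mul V hVdet
  have hlt : ∀ (j : Fin m) (k : Fin n), (j : ℕ) + (k : ℕ) * m < m * n := by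
    intro j k
    have hj := j.isLt
    have hk := k.isLt
    calc (j:ℕ) + (k:ℕ)*m < m + (k:ℕ)*m := by omega
    _ = ((k:ℕ)+1)*m := by ring
    _ ≤ n * m := Nat.mul_le_mul_right m hk
    _ = m * n := Nat.mul_comm n m
  set idx : Fin m → Fin n → Fin (m*n) := fun j k => ⟨(j:ℕ) + (k:ℕ)*m, hlt j k⟩ with hidx
  have hidx_inj : ∀ (j1 j2 : Fin m) (k1 k2 : Fin n),
      idx j1 k1 = idx j2 k2 → j1 = j2 ∧ k1 = k2 := by
    intro j1 j2 k1 k2 h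
    have hval : (j1:ℕ) + (k1:ℕ)*m = (j2:ℕ) + (k2:ℕ)*m := congrArg Fin.val h
    have hmod : (j1:ℕ) = (j2:ℕ) := by
      have h1 : ((j1:ℕ) + (k1:ℕ)*m) % m = (j1:ℕ) := by
        rw [Nat.add_mul_mod_self_right, Nat.mod_eq_of_lt j1.isLt]
      have h2 : ((j2:ℕ) + (k2:ℕ)*m) % m = (j2:ℕ) := by
        rw [Nat.add_mul_mod_self_right, Nat.mod_eq_of_lt j2.isLt]
      rw [← h1, ← h2, hval]
    have hdiv : (k1:ℕ) = (k2:ℕ) := by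
      have h1 : ((j1:ℕ) + (k1:ℕ)*m) / m = (k1:ℕ) := by
        rw [Nat.add_mul_div_right _ _ hm, Nat.div_eq_of_lt j1.isLt, Nat.zero_add]
      have h2 : ((j2:ℕ) + (k2:ℕ)*m) / m = (k2:ℕ) := by
        rw [Nat.add_mul_div_right _ _ hm, Nat.div_eq_of_lt j2.isLt, Nat.zero_add]
      rw [← h1, ← h2, hval]
    exact ⟨Fin.ext hmod, Fin.ext hdiv⟩
  have hbij : Function.Bijective (fun jk : Fin m × Fin n => idx jk.1 jk.2) := by
    rw [Fintype.bijective_iff_injective_and_card]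
    refine ⟨?_, by simp⟩
    rintro ⟨j1, k1⟩ ⟨j2, k2⟩ h
    obtain ⟨h1, h2⟩ := hidx_inj j1 j2 k1 k2 h
    exact Prod.ext h1 h2
  set ee : Fin m × Fin n ≃ Fin (m*n) := Equiv.ofBijective _ hbij with hee
  refine ⟨fun c j k => ∑ a : Fin (m*n), V⁻¹ (idx j k) a • c (e.symm a), ?_⟩
  intro A B
  funext j k
  show (∑ a : Fin (m*n), V⁻¹ (idx j k) a •
      ((∑ j' : Fin m, y a ^ (j' : ℕ) • A j')ᵀ *
       (∑ k' : Fin n, y a ^ ((k' : ℕ) * m) • B k'))) = (A j)ᵀ * B k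
  set M : Fin (m*n) → Matrix (Fin p) (Fin u) F :=
    fun d => (A (ee.symm d).1)ᵀ * B (ee.symm d).2 with hM
  have hMidx : ∀ (j' : Fin m) (k' : Fin n), M (idx j' k') = (A j')ᵀ * B k' := by
    intro j' k'
    have h : ee.symm (idx j' k') = (j', k') := ee.symm_apply_eq.2 rfl
    rw [hM]
    simp only [h]
  have hpow : ∀ (a : Fin (m*n)) (j' : Fin m) (k' : Fin n),
      y a ^ ((j':ℕ) + (k':ℕ)*m) = y a ^ ((idx j' k' : Fin (m*n)) : ℕ) := fun _ _ _ => rfl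
  have hwork : ∀ a : Fin (m*n),
      (∑ j' : Fin m, y a ^ (j' : ℕ) • A j')ᵀ * (∑ k' : Fin n, y a ^ ((k' : ℕ) * m) • B k')
      = ∑ d : Fin (m*n), y a ^ (d : ℕ) • M d := by
    intro a
    calc (∑ j' : Fin m, y a ^ (j':ℕ) • A j')ᵀ * (∑ k' : Fin n, y a ^ ((k':ℕ)*m) • B k')
        = ∑ j' : Fin m, ∑ k' : Fin n, y a ^ ((j':ℕ) + (k':ℕ)*m) • ((A j')ᵀ * B k') := by
          rw [Matrix.transpose_sum, Matrix.sum_mul]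
          refine Finset.sum_congr rfl fun j' _ => ?_
          rw [Matrix.mul_sum]
          refine Finset.sum_congr rfl fun k' _ => ?_
          rw [Matrix.transpose_smul, Matrix.smul_mul, Matrix.mul_smul, smul_smul, pow_add]
      _ = ∑ jk : Fin m × Fin n, y a ^ ((jk.1:ℕ) + (jk.2:ℕ)*m) • ((A jk.1)ᵀ * B jk.2) := by
          rw [Fintype.sum_prod_type]
      _ = ∑ d : Fin (m*n), y a ^ (d : ℕ) • M d := by
          refine Fintype.sum_bijective _ hbij _ _ ?_
          rintro ⟨j', k'⟩
          simp only [hMidx, hpow]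
  calc (∑ a : Fin (m*n), V⁻¹ (idx j k) a •
        ((∑ j' : Fin m, y a ^ (j' : ℕ) • A j')ᵀ *
         (∑ k' : Fin n, y a ^ ((k' : ℕ) * m) • B k')))
      = ∑ a : Fin (m*n), ∑ d : Fin (m*n), (V⁻¹ (idx j k) a * y a ^ (d:ℕ)) • M d := by
        refine Finset.sum_congr rfl fun a _ => ?_
        rw [hwork a, Finset.smul_sum]
        refine Finset.sum_congr rfl fun d _ => ?_
        rw [smul_smul]
    _ = ∑ d : Fin (m*n), (∑ a : Fin (m*n), V⁻¹ (idx j k) a * y a ^ (d:ℕ)) • M d := by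
        rw [Finset.sum_comm]
        exact Finset.sum_congr rfl fun d _ => (Finset.sum_smul).symm
    _ = ∑ d : Fin (m*n), ((V⁻¹ * V) (idx j k) d) • M d := by
        refine Finset.sum_congr rfl fun d _ => ?_
        congr 1
    _ = M (idx j k) := by
        rw [hVinv]
        simp [Matrix.one_apply, ite_smul, Finset.sum_ite_eq]
    _ = (A j)ᵀ * B k := hMidx j k
end

section
/- Let F be a finite field with q ≥ 2 elements and assume s ≥ r (A is a tall matrix). For ANY computation strategy (f_i, g_i)_{i<N} and ANY subset S ⊆ {0,…,N−1} with |S| ≤ mn − 1, there is no function D from the tuples of worker outputs indexed by S to F^(r×t) such that D((f_i(A)^T g_i(B))_{i∈S}) = A^T B for all A ∈ F^(s×r) and B ∈ F^(s×t). Consequently, every k-recoverable computation strategy satisfies k ≥ mn. -/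
/-!
Fix a matrix `A` whose transpose is onto all of `F^(r×t)` as `B` varies (a 0/1 selection matrix,
which exists since `s ≥ r`). For this `A` the target `Aᵀ B` ranges over all `q^(rt)` matrices, so a
decoder reading `|S|` worker outputs of size `p × u` needs `q^(rt) ≤ q^(pu|S|)`, i.e. `mn ≤ |S|`.
-/

open Matrix

lemma Matrix.card_eq_pow {α β F : Type*} [Fintype α] [Fintype β] [DecidableEq α] [DecidableEq β]
    [Fintype F] : Fintype.card (Matrix α β F) = Fintype.card F ^ (Fintype.card α * Fintype.card β) := by
  change Fintype.card (α → β → F) = _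
  rw [Fintype.card_fun, Fintype.card_fun, ← pow_mul, mul_comm]

lemma Matrix.exists_surjective_transpose_mul {F σ α β : Type*} [Semiring F] [Fintype σ]
    (e : α ↪ σ) : ∃ A : Matrix σ α F, Function.Surjective fun B : Matrix σ β F => Aᵀ * B := by
  classical
  refine ⟨(1 : Matrix σ σ F).submatrix id e, fun M => ⟨of (Function.extend e M 0), ?_⟩⟩
  ext j l
  simp only [transpose_submatrix, transpose_one, mul_apply, submatrix_apply, id, one_apply, ite_mul,
    one_mul, zero_mul, Finset.sum_ite_eq, Finset.mem_univ, if_true, of_apply]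
  exact congrFun (e.injective.extend_apply (g := (M : α → β → F)) 0 j) l

theorem Matrix.card_le_of_leftInverse_transpose_mul {F σ α β W : Type*} [Semiring F] [Fintype F]
    [Fintype σ] [Fintype α] [Fintype β] [DecidableEq α] [DecidableEq β] [Fintype W]
    (hα : Fintype.card α ≤ Fintype.card σ) (Φ : Matrix σ α F → Matrix σ β F → W)
    (D : W → Matrix α β F) (hD : ∀ A B, D (Φ A B) = Aᵀ * B) :
    Fintype.card (Matrix α β F) ≤ Fintype.card W := by
  obtain ⟨e⟩ := Function.Embedding.nonempty_of_card_le hα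
  obtain ⟨A, hA⟩ := exists_surjective_transpose_mul (β := β) (F := F) e
  choose lift hlift using hA
  have hinj : Function.Injective fun M => Φ A (lift M) :=
    Function.LeftInverse.injective (g := D) fun M => (hD A (lift M)).trans (hlift M)
  exact Fintype.card_le_of_injective _ hinj

theorem mul_le_card_of_recovers {F : Type*} [Field F] [Fintype F] {s p u m n N : ℕ}
    (hp : 0 < p) (hu : 0 < u) (hs : m * p ≤ s)
    (f : Fin N → Matrix (Fin s) (Fin m × Fin p) F → Matrix (Fin s) (Fin p) F)
    (g : Fin N → Matrix (Fin s) (Fin n × Fin u) F → Matrix (Fin s) (Fin u) F) (S : Finset (Fin N))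
    (hS : ∃ D : ({i : Fin N // i ∈ S} → Matrix (Fin p) (Fin u) F) →
        Matrix (Fin m × Fin p) (Fin n × Fin u) F,
      ∀ (A : Matrix (Fin s) (Fin m × Fin p) F) (B : Matrix (Fin s) (Fin n × Fin u) F),
        D (fun i => (f i.1 A)ᵀ * g i.1 B) = Aᵀ * B) :
    m * n ≤ S.card := by
  obtain ⟨D, hD⟩ := hS
  have hcard := card_le_of_leftInverse_transpose_mul (by simpa using hs)
    (fun A B (i : {i // i ∈ S}) => (f i.1 A)ᵀ * g i.1 B) D hD
  rw [card_eq_pow, Fintype.card_fun, card_eq_pow, ← pow_mul,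
    Nat.pow_le_pow_iff_right Fintype.one_lt_card] at hcard
  simp only [Fintype.card_prod, Fintype.card_fin, Fintype.card_coe] at hcard
  refine Nat.le_of_mul_le_mul_left ?_ (Nat.mul_pos hp hu)
  calc p * u * (m * n) = m * p * (n * u) := by ring
    _ ≤ p * u * S.card := hcard

/-- converse bound. Over a finite field, with tall `A` (`s ≥ r = m·p`),
no computation strategy can recover `Aᵀ B` from the results of at most `mn - 1`
workers; consequently every `k`-recoverable strategy has `k ≥ mn`.
Columns of `A` are indexed by `Fin m × Fin p` (`r = m·p`) and columns of `B` by
`Fin n × Fin u` (`t = n·u`). -/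
theorem matrix_mul_recovery_converse {F : Type*} [Field F] [Fintype F]
    {s p u m n N : ℕ}
    (hm : 0 < m) (hn : 0 < n) (hp : 0 < p) (hu : 0 < u) (hs : m * p ≤ s)
    (f : Fin N → Matrix (Fin s) (Fin m × Fin p) F → Matrix (Fin s) (Fin p) F)
    (g : Fin N → Matrix (Fin s) (Fin n × Fin u) F → Matrix (Fin s) (Fin u) F) :
    (∀ S : Finset (Fin N), S.card ≤ m * n - 1 →
      ¬ ∃ D : ({i : Fin N // i ∈ S} → Matrix (Fin p) (Fin u) F) →
              Matrix (Fin m × Fin p) (Fin n × Fin u) F,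
          ∀ (A : Matrix (Fin s) (Fin m × Fin p) F) (B : Matrix (Fin s) (Fin n × Fin u) F),
            D (fun i => (f i.1 A)ᵀ * g i.1 B) = Aᵀ * B)
    ∧
    (∀ k : ℕ, k ≤ N →
      (∀ S : Finset (Fin N), S.card = k →
        ∃ D : ({i : Fin N // i ∈ S} → Matrix (Fin p) (Fin u) F) →
              Matrix (Fin m × Fin p) (Fin n × Fin u) F,
          ∀ (A : Matrix (Fin s) (Fin m × Fin p) F) (B : Matrix (Fin s) (Fin n × Fin u) F),
            D (fun i => (f i.1 A)ᵀ * g i.1 B) = Aᵀ * B) →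
      m * n ≤ k) := by
  refine ⟨fun S hS hrec => ?_, fun k hk hrec => ?_⟩
  · have := mul_le_card_of_recovers hp hu hs f g S hrec
    have := Nat.mul_pos hm hn
    omega
  · obtain ⟨S, -, rfl⟩ := Finset.exists_subset_card_eq (s := (Finset.univ : Finset (Fin N)))
      (by simpa using hk)
    exact mul_le_card_of_recovers hp hu hs f g S (hrec S rfl)
end

section
/- Assume s ≥ r, N ≥ mn, and F is a finite field with q ≥ max(N, 2) elements. Then the optimum recovery threshold for distributed matrix multiplication equals mn: there exists an mn-recoverable computation strategy (namely the (1,m)-polynomial code built from N pairwise distinct evaluation points), and every k-recoverable computation strategy satisfies k ≥ mn. Hence mn = min{ k : there exists a k-recoverable computation strategy }. -/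
/-!
Worker `i` of the polynomial code returns `∑_{j,k} x_i ^ (j + k m) • A_jᵀ B_k`, the evaluation at
`x_i` of a matrix polynomial whose `mn` coefficients are exactly the blocks of `Aᵀ B`, with
pairwise distinct exponents `j + k m < mn`. Any `mn` distinct evaluations determine these
coefficients by inverting a Vandermonde matrix.

Conversely, when `s ≥ r` every `r × t` matrix is of the form `Aᵀ B`, so a decoder fed by `k`
workers maps `(F^{p×u})^k` onto `F^{r×t}`; counting gives `q^{kpu} ≥ q^{mnpu}`, i.e. `k ≥ mn`.
-/

open Matrix BigOperators

section Interpolation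

variable {F M : Type*} [Field F] [AddCommGroup M] [Module F M] {d : ℕ}

theorem exists_vandermonde_decoder {y : Fin d → F} (hy : Function.Injective y) :
    ∃ D : (Fin d → M) → Fin d → M, ∀ c, D (fun l => ∑ w : Fin d, y l ^ (w : ℕ) • c w) = c := by
  have hV : IsUnit (vandermonde y).det :=
    isUnit_iff_ne_zero.mpr (det_vandermonde_ne_zero_iff.mpr hy)
  refine ⟨fun v w => ∑ l, (vandermonde y)⁻¹ w l • v l, fun c => funext fun w => ?_⟩
  calc ∑ l, (vandermonde y)⁻¹ w l • ∑ w' : Fin d, y l ^ (w' : ℕ) • c w'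
      = ∑ w', ((vandermonde y)⁻¹ * vandermonde y) w w' • c w' := by
        simp only [Finset.smul_sum, smul_smul, mul_apply, vandermonde_apply, Finset.sum_smul]
        exact Finset.sum_comm
    _ = c w := by simp [nonsing_inv_mul _ hV, one_apply]

end Interpolation

section BlockProducts

variable {F : Type*} [CommRing F] {σ ι κ ρ τ : Type*} [Fintype σ] [Fintype ι] [Fintype κ]

theorem sum_smul_transpose_mul_sum_smul (a : ι → F) (b : κ → F) (P : ι → Matrix σ ρ F)
    (Q : κ → Matrix σ τ F) :
    (∑ i, a i • P i)ᵀ * (∑ k, b k • Q k) = ∑ i, ∑ k, (a i * b k) • ((P i)ᵀ * Q k) := by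
  simp only [transpose_sum, transpose_smul, Matrix.sum_mul, Matrix.mul_sum, Matrix.smul_mul,
    Matrix.mul_smul, Finset.smul_sum, smul_smul]
  rw [Finset.sum_comm]
  simp only [mul_comm (b _)]

theorem transpose_submatrix_mul_submatrix {ρ' τ' : Type*} (A : Matrix σ ρ F) (B : Matrix σ τ F)
    (e : ρ' → ρ) (e' : τ' → τ) :
    (A.submatrix id e)ᵀ * B.submatrix id e' = (Aᵀ * B).submatrix e e' := by
  rw [transpose_submatrix, submatrix_mul _ _ _ _ _ Function.bijective_id]

end BlockProducts

/-- Block `(j, k)` of the product is the coefficient of `x ^ (j + k m)` in the worker's output. -/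
def polyCodeIndex (m n : ℕ) : Fin m × Fin n ≃ Fin (m * n) :=
  (Equiv.prodComm _ _).trans (finProdFinEquiv.trans (finCongr (Nat.mul_comm n m)))

theorem polyCodeIndex_val {m n : ℕ} (jk : Fin m × Fin n) :
    (polyCodeIndex m n jk : ℕ) = jk.1 + jk.2 * m := by
  simp [polyCodeIndex, finProdFinEquiv, Nat.mul_comm]

theorem polyCode_output_eq_sum {F : Type*} [CommRing F] {σ ρ τ : Type*} [Fintype σ] {m n : ℕ}
    (x : F) (A : Matrix σ (Fin m × ρ) F) (B : Matrix σ (Fin n × τ) F) :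
    (∑ j : Fin m, x ^ (j : ℕ) • A.submatrix id (fun a => (j, a)))ᵀ *
        (∑ k : Fin n, x ^ ((k : ℕ) * m) • B.submatrix id (fun b => (k, b))) =
      ∑ w : Fin (m * n), x ^ (w : ℕ) • (Aᵀ * B).submatrix
        (fun a => (((polyCodeIndex m n).symm w).1, a))
        (fun b => (((polyCodeIndex m n).symm w).2, b)) := by
  rw [sum_smul_transpose_mul_sum_smul, ← (polyCodeIndex m n).sum_comp, Fintype.sum_prod_type]
  simp only [transpose_submatrix_mul_submatrix, ← pow_add, polyCodeIndex_val,
    Equiv.symm_apply_apply]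

theorem polyCode_recoverable {F : Type*} [Field F] {s p u m n N : ℕ}
    (x : Fin N → F) (hx : Function.Injective x) (S : Finset (Fin N)) (hS : S.card = m * n) :
    ∃ D : ({i : Fin N // i ∈ S} → Matrix (Fin p) (Fin u) F) →
          Matrix (Fin m × Fin p) (Fin n × Fin u) F,
      ∀ (A : Matrix (Fin s) (Fin m × Fin p) F) (B : Matrix (Fin s) (Fin n × Fin u) F),
        D (fun i =>
            (∑ j : Fin m, x i.1 ^ (j : ℕ) • A.submatrix id (fun a => (j, a)))ᵀ *
            (∑ k : Fin n, x i.1 ^ ((k : ℕ) * m) • B.submatrix id (fun b => (k, b))))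
          = Aᵀ * B := by
  let eS := S.equivFinOfCardEq hS
  obtain ⟨decode, hdecode⟩ := exists_vandermonde_decoder (M := Matrix (Fin p) (Fin u) F)
    (y := fun l => x (eS.symm l)) (hx.comp (Subtype.val_injective.comp eS.symm.injective))
  refine ⟨fun c => of fun ja kb => decode (fun l => c (eS.symm l))
    (polyCodeIndex m n (ja.1, kb.1)) ja.2 kb.2, fun A B => ?_⟩
  ext ⟨j, a⟩ ⟨k, b⟩
  simp only [polyCode_output_eq_sum, of_apply, hdecode]
  simp only [Equiv.symm_apply_apply, submatrix_apply]

theorem Matrix.card_eq {m n α : Type*} [Fintype m] [DecidableEq m] [Fintype n] [DecidableEq n]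
    [Fintype α] :
    Fintype.card (Matrix m n α) = Fintype.card α ^ (Fintype.card m * Fintype.card n) := by
  rw [Fintype.card_congr of.symm]
  simp [pow_mul']

section Surjectivity

variable {F : Type*} [Semiring F] {σ ρ τ : Type*} [Fintype σ] [DecidableEq σ] [DecidableEq ρ]

theorem transpose_mul_submatrix_one_of_injective {ι : ρ → σ} (hι : Function.Injective ι) :
    ((1 : Matrix σ σ F).submatrix id ι)ᵀ * (1 : Matrix σ σ F).submatrix id ι = 1 := by
  rw [transpose_submatrix, transpose_one, ← submatrix_mul _ _ _ _ _ Function.bijective_id,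
    Matrix.mul_one, submatrix_one _ hι]

theorem surjective_transpose_mul [Fintype ρ] {ι : ρ → σ} (hι : Function.Injective ι) :
    Function.Surjective fun AB : Matrix σ ρ F × Matrix σ τ F => AB.1ᵀ * AB.2 := fun M =>
  ⟨((1 : Matrix σ σ F).submatrix id ι, (1 : Matrix σ σ F).submatrix id ι * M), by
    simp only [← Matrix.mul_assoc, transpose_mul_submatrix_one_of_injective hι, Matrix.one_mul]⟩

end Surjectivity

theorem mul_le_of_recoverable {F : Type*} [Field F] [Fintype F] {s p u m n N k : ℕ}
    (hp : 0 < p) (hu : 0 < u) (hs : m * p ≤ s) (hN : m * n ≤ N)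
    (f : Fin N → Matrix (Fin s) (Fin m × Fin p) F → Matrix (Fin s) (Fin p) F)
    (g : Fin N → Matrix (Fin s) (Fin n × Fin u) F → Matrix (Fin s) (Fin u) F)
    (h : ∀ S : Finset (Fin N), S.card = k →
      ∃ D : ({i : Fin N // i ∈ S} → Matrix (Fin p) (Fin u) F) →
            Matrix (Fin m × Fin p) (Fin n × Fin u) F,
        ∀ (A : Matrix (Fin s) (Fin m × Fin p) F) (B : Matrix (Fin s) (Fin n × Fin u) F),
          D (fun i => (f i.1 A)ᵀ * g i.1 B) = Aᵀ * B) :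
    m * n ≤ k := by
  rcases le_or_gt N k with hNk | hkN
  · exact hN.trans hNk
  obtain ⟨S, -, hS⟩ := Finset.exists_subset_card_eq (s := (Finset.univ : Finset (Fin N)))
    (by simpa using hkN.le)
  obtain ⟨D, hD⟩ := h S hS
  have hprod : Function.Surjective
      fun AB : Matrix (Fin s) (Fin m × Fin p) F × Matrix (Fin s) (Fin n × Fin u) F =>
        AB.1ᵀ * AB.2 :=
    surjective_transpose_mul ((Fin.castLE_injective hs).comp finProdFinEquiv.injective)
  have hD_surj : Function.Surjective D :=
    .of_comp (g := fun AB : Matrix (Fin s) (Fin m × Fin p) F × Matrix (Fin s) (Fin n × Fin u) F =>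
      fun i : S => (f i.1 AB.1)ᵀ * g i.1 AB.2) (by
        convert hprod using 1
        exact funext fun AB => hD AB.1 AB.2)
  have hcard := Fintype.card_le_of_surjective D hD_surj
  simp only [Fintype.card_fun, Matrix.card_eq, Fintype.card_prod, Fintype.card_fin,
    Fintype.card_coe, hS, ← pow_mul] at hcard
  have := (Nat.pow_le_pow_iff_right Fintype.one_lt_card).mp hcard
  exact Nat.le_of_mul_le_mul_right (by linarith) (Nat.mul_pos hp hu)

theorem optimum_recovery_threshold_eq_mn_general {F : Type*} [Field F] [Fintype F]
    {s p u m n N : ℕ}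
    (hp : 0 < p) (hu : 0 < u)
    (hs : m * p ≤ s) (hN : m * n ≤ N) (hq : N ≤ Fintype.card F) :
    (∀ x : Fin N → F, Function.Injective x →
      ∀ S : Finset (Fin N), S.card = m * n →
        ∃ D : ({i : Fin N // i ∈ S} → Matrix (Fin p) (Fin u) F) →
              Matrix (Fin m × Fin p) (Fin n × Fin u) F,
          ∀ (A : Matrix (Fin s) (Fin m × Fin p) F) (B : Matrix (Fin s) (Fin n × Fin u) F),
            D (fun i =>
                (∑ j : Fin m, x i.1 ^ (j : ℕ) • A.submatrix id (fun a => (j, a)))ᵀ *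
                (∑ k : Fin n, x i.1 ^ ((k : ℕ) * m) • B.submatrix id (fun b => (k, b))))
              = Aᵀ * B)
    ∧
    IsLeast {k : ℕ |
      ∃ (f : Fin N → Matrix (Fin s) (Fin m × Fin p) F → Matrix (Fin s) (Fin p) F)
        (g : Fin N → Matrix (Fin s) (Fin n × Fin u) F → Matrix (Fin s) (Fin u) F),
        ∀ S : Finset (Fin N), S.card = k →
          ∃ D : ({i : Fin N // i ∈ S} → Matrix (Fin p) (Fin u) F) →
                Matrix (Fin m × Fin p) (Fin n × Fin u) F,
            ∀ (A : Matrix (Fin s) (Fin m × Fin p) F) (B : Matrix (Fin s) (Fin n × Fin u) F),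
              D (fun i => (f i.1 A)ᵀ * g i.1 B) = Aᵀ * B} (m * n) := by
  refine ⟨polyCode_recoverable, ?_, fun k ⟨f, g, h⟩ => mul_le_of_recoverable hp hu hs hN f g h⟩
  obtain ⟨x⟩ : Nonempty (Fin N ↪ F) :=
    Function.Embedding.nonempty_of_card_le (by simpa using hq)
  exact ⟨fun i A => ∑ j : Fin m, x i ^ (j : ℕ) • A.submatrix id (fun a => (j, a)),
    fun i B => ∑ k : Fin n, x i ^ ((k : ℕ) * m) • B.submatrix id (fun b => (k, b)),
    polyCode_recoverable x x.injective⟩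

/-- Theorem 1: the optimum recovery threshold for distributed matrix
multiplication is exactly `mn`. The (1,m)-polynomial code built from any `N` pairwise
distinct evaluation points is `mn`-recoverable, and `mn` is the minimum `k` for which
some `k`-recoverable computation strategy exists. Columns of `A` are indexed by
`Fin m × Fin p` (`r = m·p`) and those of `B` by `Fin n × Fin u` (`t = n·u`); the
`j`-th column block of `A` is `A.submatrix id (fun a => (j, a))`. -/
theorem optimum_recovery_threshold_eq_mn {F : Type*} [Field F] [Fintype F]
    {s p u m n N : ℕ}
    (hm : 0 < m) (hn : 0 < n) (hp : 0 < p) (hu : 0 < u)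
    (hs : m * p ≤ s) (hN : m * n ≤ N) (hq : N ≤ Fintype.card F) :
    (∀ x : Fin N → F, Function.Injective x →
      ∀ S : Finset (Fin N), S.card = m * n →
        ∃ D : ({i : Fin N // i ∈ S} → Matrix (Fin p) (Fin u) F) →
              Matrix (Fin m × Fin p) (Fin n × Fin u) F,
          ∀ (A : Matrix (Fin s) (Fin m × Fin p) F) (B : Matrix (Fin s) (Fin n × Fin u) F),
            D (fun i =>
                (∑ j : Fin m, x i.1 ^ (j : ℕ) • A.submatrix id (fun a => (j, a)))ᵀ *
                (∑ k : Fin n, x i.1 ^ ((k : ℕ) * m) • B.submatrix id (fun b => (k, b))))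
              = Aᵀ * B)
    ∧
    IsLeast {k : ℕ |
      ∃ (f : Fin N → Matrix (Fin s) (Fin m × Fin p) F → Matrix (Fin s) (Fin p) F)
        (g : Fin N → Matrix (Fin s) (Fin n × Fin u) F → Matrix (Fin s) (Fin u) F),
        ∀ S : Finset (Fin N), S.card = k →
          ∃ D : ({i : Fin N // i ∈ S} → Matrix (Fin p) (Fin u) F) →
                Matrix (Fin m × Fin p) (Fin n × Fin u) F,
            ∀ (A : Matrix (Fin s) (Fin m × Fin p) F) (B : Matrix (Fin s) (Fin n × Fin u) F),
              D (fun i => (f i.1 A)ᵀ * g i.1 B) = Aᵀ * B} (m * n) :=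
  optimum_recovery_threshold_eq_mn_general hp hu hs hN hq
end

section
/- Assume s ≥ r, N ≥ mn, and F is a finite field with q ≥ max(N, 2) elements, and let T_0,…,T_{N−1} ∈ ℝ be the (fixed) computation times of the N workers. Say a computation strategy is decodable at time t if there exists a function D with D((C̃_i)_{i ∈ S(t)}) = A^T B for all inputs A, B, where S(t) = { i : T_i ≤ t }. Then: (i) for every t, any computation strategy decodable at time t satisfies |S(t)| ≥ mn; (ii) the (1,m)-polynomial code is decodable at time t whenever |S(t)| ≥ mn; consequently the computation latency T = inf{ t : the strategy is decodable at time t } of any computation strategy satisfies T ≥ T_poly, where T_poly = inf{ t : |S(t)| ≥ mn } is the latency of the polynomial code. -/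
/-!
Since `s ≥ mp`, there is an `A₀` whose columns are distinct standard basis vectors, and then
`B ↦ A₀ᵀ B` is onto all `mp × nu` matrices. So a decoder reading `|S(t)|` blocks of size `p × u`
is onto a set of size `q^(mp·nu)`, which forces `|S(t)| ≥ mn`.

Conversely, entry `(a, b)` of the result of the polynomial-code worker `i` is the value at `x i`
of a polynomial of degree `< mn` whose coefficient of `X^(j + km)` is entry `((j, a), (k, b))` of
`AᵀB`; `mn` evaluations at distinct points determine it by Lagrange interpolation.
-/

open Matrix Polynomial

theorem exists_transpose_mul_eq {R σ α β : Type*} [CommSemiring R] [Fintype σ] [DecidableEq σ]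
    [Fintype α] [DecidableEq α] (e : α ↪ σ) (C : Matrix α β R) :
    ∃ (A : Matrix σ α R) (B : Matrix σ β R), Aᵀ * B = C := by
  set A : Matrix σ α R := (1 : Matrix σ σ R).submatrix id e
  have hA : Aᵀ * A = 1 := by
    rw [transpose_submatrix, transpose_one, ← submatrix_mul _ _ _ _ _ Function.bijective_id,
      Matrix.mul_one, submatrix_one_embedding]
  exact ⟨A, A * C, by rw [← Matrix.mul_assoc, hA, Matrix.one_mul]⟩

theorem card_mul_card_le_of_decodes {R σ κ τ ι ρ ν : Type*} [CommSemiring R] [Fintype R]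
    [Nontrivial R] [Fintype σ] [DecidableEq σ] [Fintype κ] [DecidableEq κ] [Fintype τ] [Fintype ι]
    [Fintype ρ] [Fintype ν] (hκ : Fintype.card κ ≤ Fintype.card σ)
    (f : ι → Matrix σ κ R → Matrix σ ρ R) (g : ι → Matrix σ τ R → Matrix σ ν R)
    (D : (ι → Matrix ρ ν R) → Matrix κ τ R)
    (hD : ∀ A B, D (fun i => (f i A)ᵀ * g i B) = Aᵀ * B) :
    Fintype.card κ * Fintype.card τ ≤ Fintype.card ι * (Fintype.card ρ * Fintype.card ν) := by
  classical
  obtain ⟨e⟩ := Function.Embedding.nonempty_of_card_le hκ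
  have hsurj : Function.Surjective D := fun C => by
    obtain ⟨A, B, hAB⟩ := exists_transpose_mul_eq e C
    exact ⟨_, (hD A B).trans hAB⟩
  have hcard := Nat.card_le_card_of_surjective D hsurj
  simp only [Matrix, Nat.card_fun] at hcard
  simp only [Nat.card_eq_fintype_card, ← pow_mul] at hcard
  rw [Nat.pow_le_pow_iff_right Fintype.one_lt_card] at hcard
  convert hcard using 1 <;> ring

theorem mul_le_card_of_decodes {R ι : Type*} [CommSemiring R] [Fintype R] [Nontrivial R]
    [Fintype ι] {s m n p u : ℕ} (hp : 0 < p) (hu : 0 < u) (hs : m * p ≤ s)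
    (f : ι → Matrix (Fin s) (Fin m × Fin p) R → Matrix (Fin s) (Fin p) R)
    (g : ι → Matrix (Fin s) (Fin n × Fin u) R → Matrix (Fin s) (Fin u) R)
    (D : (ι → Matrix (Fin p) (Fin u) R) → Matrix (Fin m × Fin p) (Fin n × Fin u) R)
    (hD : ∀ A B, D (fun i => (f i A)ᵀ * g i B) = Aᵀ * B) :
    m * n ≤ Fintype.card ι := by
  have hcard := card_mul_card_le_of_decodes (by simpa using hs) f g D hD
  simp only [Fintype.card_prod, Fintype.card_fin] at hcard
  refine Nat.le_of_mul_le_mul_right ?_ (Nat.mul_pos hp hu)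
  calc m * n * (p * u) = m * p * (n * u) := by ring
    _ ≤ Fintype.card ι * (p * u) := hcard

section PolynomialCode

variable {R F σ ρ ν : Type*} [CommSemiring R] [Field F] {m n : ℕ}

def polyCodeLeft (m : ℕ) (x : R) (A : Matrix σ (Fin m × ρ) R) : Matrix σ ρ R :=
  ∑ j : Fin m, x ^ (j : ℕ) • A.submatrix id (fun a => (j, a))

def polyCodeRight (m : ℕ) (x : R) (B : Matrix σ (Fin n × ν) R) : Matrix σ ν R :=
  ∑ k : Fin n, x ^ ((k : ℕ) * m) • B.submatrix id (fun b => (k, b))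

def blockExponent (m n : ℕ) (jk : Fin m × Fin n) : ℕ := jk.1 + jk.2 * m

theorem blockExponent_eq_finProdFinEquiv (jk : Fin m × Fin n) :
    blockExponent m n jk = finProdFinEquiv jk.swap := by
  simp [blockExponent, finProdFinEquiv_apply_val, mul_comm]

theorem blockExponent_injective : Function.Injective (blockExponent m n) := fun jk jk' h => by
  simpa only [blockExponent_eq_finProdFinEquiv, Fin.val_inj, EmbeddingLike.apply_eq_iff_eq,
    Prod.swap_inj] using h

theorem blockExponent_lt (jk : Fin m × Fin n) : blockExponent m n jk < m * n := by
  rw [blockExponent_eq_finProdFinEquiv]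
  exact (finProdFinEquiv jk.swap).isLt.trans_eq (mul_comm n m)

noncomputable def blockPoly (C : Matrix (Fin m × ρ) (Fin n × ν) R) (a : ρ) (b : ν) : R[X] :=
  ∑ jk : Fin m × Fin n, monomial (blockExponent m n jk) (C (jk.1, a) (jk.2, b))

theorem degree_blockPoly_lt (C : Matrix (Fin m × ρ) (Fin n × ν) R) (a : ρ) (b : ν) :
    (blockPoly C a b).degree < (m * n : ℕ) := by
  rw [← mem_degreeLT]
  exact Submodule.sum_mem _ fun jk _ =>
    mem_degreeLT.mpr ((degree_monomial_le _ _).trans_lt (by exact_mod_cast blockExponent_lt jk))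

theorem coeff_blockPoly (C : Matrix (Fin m × ρ) (Fin n × ν) R) (a : ρ) (b : ν)
    (jk : Fin m × Fin n) :
    (blockPoly C a b).coeff (blockExponent m n jk) = C (jk.1, a) (jk.2, b) := by
  rw [blockPoly, finsetSum_coeff, Finset.sum_eq_single jk]
  · exact coeff_monomial_same _ _
  · intro jk' _ hne
    exact coeff_monomial_of_ne _ (blockExponent_injective.ne hne.symm)
  · simp

theorem polyCodeLeft_transpose_mul_polyCodeRight [Fintype σ] (x : R) (A : Matrix σ (Fin m × ρ) R)
    (B : Matrix σ (Fin n × ν) R) :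
    (polyCodeLeft m x A)ᵀ * polyCodeRight m x B =
      ∑ jk : Fin m × Fin n, x ^ blockExponent m n jk •
        (Aᵀ * B).submatrix (fun a => (jk.1, a)) (fun b => (jk.2, b)) := by
  rw [polyCodeLeft, polyCodeRight, transpose_sum, Matrix.sum_mul, Fintype.sum_prod_type]
  simp_rw [Matrix.mul_sum]
  refine Finset.sum_congr rfl fun j _ => Finset.sum_congr rfl fun k _ => ?_
  rw [transpose_smul, Matrix.smul_mul, Matrix.mul_smul, smul_smul, ← pow_add,
    submatrix_mul _ _ _ _ _ Function.bijective_id, transpose_submatrix]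
  rfl

theorem polyCode_apply_eq_eval [Fintype σ] (x : R) (A : Matrix σ (Fin m × ρ) R)
    (B : Matrix σ (Fin n × ν) R) (a : ρ) (b : ν) :
    ((polyCodeLeft m x A)ᵀ * polyCodeRight m x B) a b = (blockPoly (Aᵀ * B) a b).eval x := by
  simp [polyCodeLeft_transpose_mul_polyCodeRight, blockPoly, eval_finsetSum, Matrix.sum_apply,
    mul_comm]

noncomputable def polyCodeDecoder {ι : Type*} [Fintype ι] [DecidableEq ι] (m : ℕ) (v : ι → F)
    (c : ι → Matrix ρ ν F) : Matrix (Fin m × ρ) (Fin n × ν) F :=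
  Matrix.of fun ja kb =>
    (Lagrange.interpolate Finset.univ v fun i => c i ja.2 kb.2).coeff
      (blockExponent m n (ja.1, kb.1))

theorem polyCodeDecoder_polyCode [Fintype σ] {ι : Type*} [Fintype ι] [DecidableEq ι] {v : ι → F}
    (hv : Function.Injective v) (hcard : m * n ≤ Fintype.card ι)
    (A : Matrix σ (Fin m × ρ) F) (B : Matrix σ (Fin n × ν) F) :
    polyCodeDecoder m v (fun i => (polyCodeLeft m (v i) A)ᵀ * polyCodeRight m (v i) B) =
      Aᵀ * B := by
  ext ⟨j, a⟩ ⟨k, b⟩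
  have hdeg : (blockPoly (Aᵀ * B) a b).degree < (Finset.univ : Finset ι).card :=
    (degree_blockPoly_lt _ a b).trans_le (by exact_mod_cast hcard)
  rw [polyCodeDecoder, of_apply, ← Lagrange.eq_interpolate_of_eval_eq _ hv.injOn hdeg
    fun i _ => (polyCode_apply_eq_eval _ A B a b).symm, coeff_blockPoly _ _ _ (j, k)]

end PolynomialCode

theorem latency_lower_bound_general {F : Type*} [Field F] [Fintype F] {s p u m n N : ℕ}
    (hp : 0 < p) (hu : 0 < u)
    (hs : m * p ≤ s)
    (T : Fin N → ℝ) (x : Fin N → F) (hx : Function.Injective x)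
    (f : Fin N → Matrix (Fin s) (Fin m × Fin p) F → Matrix (Fin s) (Fin p) F)
    (g : Fin N → Matrix (Fin s) (Fin n × Fin u) F → Matrix (Fin s) (Fin u) F) :
    let DecAt : ℝ → Prop := fun t =>
      ∃ D : ({i : Fin N // T i ≤ t} → Matrix (Fin p) (Fin u) F) →
            Matrix (Fin m × Fin p) (Fin n × Fin u) F,
        ∀ (A : Matrix (Fin s) (Fin m × Fin p) F) (B : Matrix (Fin s) (Fin n × Fin u) F),
          D (fun i => (f i.1 A)ᵀ * g i.1 B) = Aᵀ * B
    (∀ t : ℝ, DecAt t → m * n ≤ Nat.card {i : Fin N // T i ≤ t})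
    ∧
    (∀ t : ℝ, m * n ≤ Nat.card {i : Fin N // T i ≤ t} →
      ∃ D : ({i : Fin N // T i ≤ t} → Matrix (Fin p) (Fin u) F) →
            Matrix (Fin m × Fin p) (Fin n × Fin u) F,
        ∀ (A : Matrix (Fin s) (Fin m × Fin p) F) (B : Matrix (Fin s) (Fin n × Fin u) F),
          D (fun i =>
              (∑ j : Fin m, x i.1 ^ (j : ℕ) • A.submatrix id (fun a => (j, a)))ᵀ *
              (∑ k : Fin n, x i.1 ^ ((k : ℕ) * m) • B.submatrix id (fun b => (k, b))))
            = Aᵀ * B)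
    ∧
    sInf {e : EReal | ∃ t : ℝ, m * n ≤ Nat.card {i : Fin N // T i ≤ t} ∧ e = (t : EReal)}
      ≤ sInf {e : EReal | ∃ t : ℝ, DecAt t ∧ e = (t : EReal)} := by
  intro DecAt
  have necessary (t : ℝ) (hdec : DecAt t) : m * n ≤ Nat.card {i : Fin N // T i ≤ t} := by
    obtain ⟨D, hD⟩ := hdec
    rw [Nat.card_eq_fintype_card]
    exact mul_le_card_of_decodes hp hu hs _ _ D hD
  refine ⟨necessary, fun t hcard => ?_, sInf_le_sInf ?_⟩
  · rw [Nat.card_eq_fintype_card] at hcard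
    exact ⟨polyCodeDecoder m fun i => x i.1,
      polyCodeDecoder_polyCode (hx.comp Subtype.val_injective) hcard⟩
  · rintro _ ⟨t, hdec, rfl⟩
    exact ⟨t, necessary t hdec, rfl⟩

/-- Theorem 2: with fixed worker computation times `T i`, (i) any
computation strategy decodable at time `t` must have at least `mn` finished workers
at time `t`; (ii) the (1,m)-polynomial code is decodable at time `t` whenever at
least `mn` workers have finished; consequently (iii) the computation latency of any
computation strategy is at least the latency `T_poly` of the polynomial code (the
latencies are infima in `EReal`, so a never-decodable strategy has latency `⊤`). -/
theorem latency_lower_bound {F : Type*} [Field F] [Fintype F] {s p u m n N : ℕ}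
    (hm : 0 < m) (hn : 0 < n) (hp : 0 < p) (hu : 0 < u)
    (hs : m * p ≤ s) (hN : m * n ≤ N) (hq : N ≤ Fintype.card F)
    (T : Fin N → ℝ) (x : Fin N → F) (hx : Function.Injective x)
    (f : Fin N → Matrix (Fin s) (Fin m × Fin p) F → Matrix (Fin s) (Fin p) F)
    (g : Fin N → Matrix (Fin s) (Fin n × Fin u) F → Matrix (Fin s) (Fin u) F) :
    let DecAt : ℝ → Prop := fun t =>
      ∃ D : ({i : Fin N // T i ≤ t} → Matrix (Fin p) (Fin u) F) →
            Matrix (Fin m × Fin p) (Fin n × Fin u) F,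
        ∀ (A : Matrix (Fin s) (Fin m × Fin p) F) (B : Matrix (Fin s) (Fin n × Fin u) F),
          D (fun i => (f i.1 A)ᵀ * g i.1 B) = Aᵀ * B
    (∀ t : ℝ, DecAt t → m * n ≤ Nat.card {i : Fin N // T i ≤ t})
    ∧
    (∀ t : ℝ, m * n ≤ Nat.card {i : Fin N // T i ≤ t} →
      ∃ D : ({i : Fin N // T i ≤ t} → Matrix (Fin p) (Fin u) F) →
            Matrix (Fin m × Fin p) (Fin n × Fin u) F,
        ∀ (A : Matrix (Fin s) (Fin m × Fin p) F) (B : Matrix (Fin s) (Fin n × Fin u) F),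
          D (fun i =>
              (∑ j : Fin m, x i.1 ^ (j : ℕ) • A.submatrix id (fun a => (j, a)))ᵀ *
              (∑ k : Fin n, x i.1 ^ ((k : ℕ) * m) • B.submatrix id (fun b => (k, b))))
            = Aᵀ * B)
    ∧
    sInf {e : EReal | ∃ t : ℝ, m * n ≤ Nat.card {i : Fin N // T i ≤ t} ∧ e = (t : EReal)}
      ≤ sInf {e : EReal | ∃ t : ℝ, DecAt t ∧ e = (t : EReal)} :=
  latency_lower_bound_general hp hu hs T x hx f g
end

section
/- Assume s ≥ r and F is a finite field with q ≥ 2 elements. Each worker output C̃_i consists of p·u elements of F. Then: (i) for any computation strategy and any subset S ⊆ {0,…,N−1} for which there exists a function D with D((C̃_i)_{i∈S}) = A^T B for all inputs A, B, the total number of field elements received by the master satisfies |S|·p·u ≥ r·t; (ii) if moreover N ≥ mn and q ≥ N, the (1,m)-polynomial code admits such a decoder for every S with |S| = mn, for which |S|·p·u = r·t exactly. Hence the minimum communication load for distributed matrix multiplication is exactly r·t field elements (i.e., r·t·log₂ q bits), and it is achieved by the polynomial code. -/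
open Matrix

/-!
Lower bound: once `card ι ≤ card κ`, every matrix `M : Matrix ι ν F` is a product `Aᵀ * B`
(take for `A` the `0/1` matrix of an embedding `ι ↪ κ`), so a decoder of `Aᵀ * B` from the
workers' answers is onto the `q ^ (r t)` matrices and the answers carry at least `r t` field
elements.

Achievability: the answer of worker `i` under the polynomial code is the value at `x i` of the
matrix polynomial `∑_{j,k} (A_jᵀ B_k) X ^ (j + k m)`, whose `m n` exponents are exactly
`0, …, m n - 1`. A polynomial of degree `< m n` is determined by its values at `m n` distinct
points (Vandermonde), so the coefficients, i.e. the blocks of `Aᵀ * B`, can be recovered.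
-/

theorem Fintype.card_matrix {R ι ν : Type*} [Fintype R] [Fintype ι] [Fintype ν] [DecidableEq ι]
    [DecidableEq ν] :
    Fintype.card (Matrix ι ν R) = Fintype.card R ^ (Fintype.card ι * Fintype.card ν) := by
  rw [Fintype.card_eq_nat_card, Matrix, Nat.card_fun, Nat.card_fun]
  simp [pow_mul']

theorem Matrix.exists_transpose_mul_eq {R κ ι ν : Type*} [Semiring R] [Fintype κ]
    {e : ι → κ} (he : Function.Injective e) (M : Matrix ι ν R) :
    ∃ (A : Matrix κ ι R) (B : Matrix κ ν R), Aᵀ * B = M := by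
  classical
  refine ⟨(1 : Matrix κ κ R).submatrix id e, of (Function.extend e M 0), ?_⟩
  rw [transpose_submatrix, transpose_one, ← Equiv.coe_refl, one_submatrix_mul]
  ext i j
  exact congrFun (he.extend_apply M 0 i) j

theorem Matrix.surjective_of_decodes_transpose_mul {R O κ ι ν : Type*} [Semiring R]
    [Fintype κ] [Fintype ι] (hικ : Fintype.card ι ≤ Fintype.card κ)
    (enc : Matrix κ ι R → Matrix κ ν R → O) (D : O → Matrix ι ν R)
    (hD : ∀ A B, D (enc A B) = Aᵀ * B) : Function.Surjective D := by
  obtain ⟨e⟩ := Function.Embedding.nonempty_of_card_le hικ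
  intro M
  obtain ⟨A, B, rfl⟩ := exists_transpose_mul_eq e.injective M
  exact ⟨enc A B, hD A B⟩

theorem Matrix.card_mul_card_le_of_decodes_transpose_mul {R W κ ι ν P U : Type*} [Semiring R]
    [Fintype R] [Nontrivial R] [Fintype W] [Fintype κ] [Fintype ι] [Fintype ν] [Fintype P]
    [Fintype U] (hικ : Fintype.card ι ≤ Fintype.card κ)
    (enc : Matrix κ ι R → Matrix κ ν R → W → Matrix P U R)
    (D : (W → Matrix P U R) → Matrix ι ν R)
    (hD : ∀ A B, D (enc A B) = Aᵀ * B) :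
    Fintype.card ι * Fintype.card ν ≤ Fintype.card W * (Fintype.card P * Fintype.card U) := by
  classical
  have hcard :=
    Fintype.card_le_of_surjective D (surjective_of_decodes_transpose_mul hικ enc D hD)
  rw [Fintype.card_fun, Fintype.card_matrix, Fintype.card_matrix, ← pow_mul] at hcard
  rw [mul_comm (Fintype.card W)]
  exact (Nat.pow_le_pow_iff_right Fintype.one_lt_card).mp hcard

section Interpolation

variable {F V ι : Type*} [Field F] [AddCommGroup V] [Module F V] [Fintype ι] {x : ι → F}

theorem eq_zero_of_forall_sum_pow_smul_eq_zero (hx : Function.Injective x) {L : ℕ}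
    (hL : L ≤ Fintype.card ι) {c : Fin L → V}
    (hc : ∀ i, ∑ d : Fin L, x i ^ (d : ℕ) • c d = 0) : c = 0 := by
  obtain ⟨e⟩ :=
    Function.Embedding.nonempty_of_card_le (α := Fin L) (β := ι) (by simpa using hL)
  ext d
  rw [Pi.zero_apply, ← Module.forall_dual_apply_eq_zero_iff F]
  intro φ
  refine congrFun (eq_zero_of_forall_index_sum_pow_mul_eq_zero (hx.comp e.injective)
    (v := fun d => φ (c d)) fun j => ?_) d
  simpa using congrArg φ (hc (e j))

theorem sum_pow_smul_injective (hx : Function.Injective x) {L : ℕ} (hL : L ≤ Fintype.card ι) :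
    Function.Injective fun (c : Fin L → V) i => ∑ d : Fin L, x i ^ (d : ℕ) • c d := by
  intro c c' h
  rw [← sub_eq_zero]
  refine eq_zero_of_forall_sum_pow_smul_eq_zero hx hL fun i => ?_
  simpa [smul_sub, Finset.sum_sub_distrib, sub_eq_zero] using congrFun h i

end Interpolation

namespace PolynomialCode

variable {R : Type*} {m n p u : ℕ}

/-- The coefficient of `X ^ d` in the product of the encoding polynomials: for
`d = j + m k` (see `finProdFinEquiv_apply_val`) it is the block `(j, k)` of `C = Aᵀ * B`. -/
def coeff (C : Matrix (Fin m × Fin p) (Fin n × Fin u) R) (d : Fin (n * m)) :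
    Matrix (Fin p) (Fin u) R :=
  C.submatrix (fun a => ((finProdFinEquiv.symm d).2, a)) (fun b => ((finProdFinEquiv.symm d).1, b))

theorem coeff_injective :
    Function.Injective (coeff : Matrix (Fin m × Fin p) (Fin n × Fin u) R → _) := by
  intro C C' h
  ext ⟨j, a⟩ ⟨k, b⟩
  simpa [coeff] using congrFun₃ h (finProdFinEquiv (k, j)) a b

theorem encode_transpose_mul_encode [CommSemiring R] {κ : Type*} [Fintype κ] (t : R)
    (A : Matrix κ (Fin m × Fin p) R) (B : Matrix κ (Fin n × Fin u) R) :
    (∑ j : Fin m, t ^ (j : ℕ) • A.submatrix id (fun a => (j, a)))ᵀ *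
      (∑ k : Fin n, t ^ ((k : ℕ) * m) • B.submatrix id (fun b => (k, b))) =
      ∑ d : Fin (n * m), t ^ (d : ℕ) • coeff (Aᵀ * B) d := by
  rw [← finProdFinEquiv.sum_comp, Fintype.sum_prod_type, Finset.sum_comm, transpose_sum,
    Matrix.sum_mul]
  refine Finset.sum_congr rfl fun j _ => ?_
  rw [Matrix.mul_sum]
  refine Finset.sum_congr rfl fun k _ => ?_
  rw [transpose_smul, Matrix.smul_mul, Matrix.mul_smul, smul_smul, ← pow_add,
    transpose_submatrix, ← submatrix_mul _ _ _ _ _ Function.bijective_id]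
  simp [coeff, mul_comm]

theorem exists_decoder {F κ ι : Type*} [Field F] [Fintype κ] [Fintype ι] {x : ι → F}
    (hx : Function.Injective x) (hι : m * n ≤ Fintype.card ι) :
    ∃ D : (ι → Matrix (Fin p) (Fin u) F) → Matrix (Fin m × Fin p) (Fin n × Fin u) F,
      ∀ (A : Matrix κ (Fin m × Fin p) F) (B : Matrix κ (Fin n × Fin u) F),
        D (fun i => (∑ j : Fin m, x i ^ (j : ℕ) • A.submatrix id (fun a => (j, a)))ᵀ *
          (∑ k : Fin n, x i ^ ((k : ℕ) * m) • B.submatrix id (fun b => (k, b)))) =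
          Aᵀ * B := by
  have henc :
      Function.Injective fun (C : Matrix (Fin m × Fin p) (Fin n × Fin u) F) i =>
        ∑ d : Fin (n * m), x i ^ (d : ℕ) • coeff C d :=
    (sum_pow_smul_injective hx (by rwa [mul_comm])).comp coeff_injective
  obtain ⟨D, hD⟩ := henc.hasLeftInverse
  refine ⟨D, fun A B => ?_⟩
  simp only [encode_transpose_mul_encode]
  exact hD (Aᵀ * B)

end PolynomialCode

theorem communication_load_optimal_general {F : Type*} [Field F] [Fintype F]
    {s p u m n N : ℕ}
    (hs : m * p ≤ s) :
    (∀ (f : Fin N → Matrix (Fin s) (Fin m × Fin p) F → Matrix (Fin s) (Fin p) F)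
       (g : Fin N → Matrix (Fin s) (Fin n × Fin u) F → Matrix (Fin s) (Fin u) F)
       (S : Finset (Fin N)),
      (∃ D : ({i : Fin N // i ∈ S} → Matrix (Fin p) (Fin u) F) →
             Matrix (Fin m × Fin p) (Fin n × Fin u) F,
        ∀ (A : Matrix (Fin s) (Fin m × Fin p) F) (B : Matrix (Fin s) (Fin n × Fin u) F),
          D (fun i => (f i.1 A)ᵀ * g i.1 B) = Aᵀ * B) →
      (m * p) * (n * u) ≤ S.card * (p * u))
    ∧
    (m * n ≤ N → N ≤ Fintype.card F →
      ∀ x : Fin N → F, Function.Injective x →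
        ∀ S : Finset (Fin N), S.card = m * n →
          (∃ D : ({i : Fin N // i ∈ S} → Matrix (Fin p) (Fin u) F) →
                 Matrix (Fin m × Fin p) (Fin n × Fin u) F,
            ∀ (A : Matrix (Fin s) (Fin m × Fin p) F) (B : Matrix (Fin s) (Fin n × Fin u) F),
              D (fun i =>
                  (∑ j : Fin m, x i.1 ^ (j : ℕ) • A.submatrix id (fun a => (j, a)))ᵀ *
                  (∑ k : Fin n, x i.1 ^ ((k : ℕ) * m) • B.submatrix id (fun b => (k, b))))
                = Aᵀ * B)
          ∧ S.card * (p * u) = (m * p) * (n * u)) := by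
  refine ⟨fun f g S ⟨D, hD⟩ => ?_, fun _ _ x hx S hS => ⟨?_, by rw [hS]; ring⟩⟩
  · simpa using Matrix.card_mul_card_le_of_decodes_transpose_mul (by simpa using hs)
      (fun A B (i : {i // i ∈ S}) => (f i.1 A)ᵀ * g i.1 B) D hD
  · exact PolynomialCode.exists_decoder (hx.comp Subtype.val_injective) (by simp [hS])

/-- Theorem 3: each worker output consists of `p·u` field elements.
(i) For any computation strategy, any subset `S` of workers from whose outputs the
master can decode `Aᵀ B` must deliver at least `r·t = (m·p)·(n·u)` field elements,
i.e. `|S|·p·u ≥ r·t`. (ii) If `N ≥ mn` and the field has at least `N` elements, the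
(1,m)-polynomial code admits such a decoder for every `S` with `|S| = mn`, and then
`|S|·p·u = r·t` exactly: the minimum communication load `r·t` is achieved. -/
theorem communication_load_optimal {F : Type*} [Field F] [Fintype F]
    {s p u m n N : ℕ}
    (hm : 0 < m) (hn : 0 < n) (hp : 0 < p) (hu : 0 < u) (hs : m * p ≤ s) :
    (∀ (f : Fin N → Matrix (Fin s) (Fin m × Fin p) F → Matrix (Fin s) (Fin p) F)
       (g : Fin N → Matrix (Fin s) (Fin n × Fin u) F → Matrix (Fin s) (Fin u) F)
       (S : Finset (Fin N)),
      (∃ D : ({i : Fin N // i ∈ S} → Matrix (Fin p) (Fin u) F) →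
             Matrix (Fin m × Fin p) (Fin n × Fin u) F,
        ∀ (A : Matrix (Fin s) (Fin m × Fin p) F) (B : Matrix (Fin s) (Fin n × Fin u) F),
          D (fun i => (f i.1 A)ᵀ * g i.1 B) = Aᵀ * B) →
      (m * p) * (n * u) ≤ S.card * (p * u))
    ∧
    (m * n ≤ N → N ≤ Fintype.card F →
      ∀ x : Fin N → F, Function.Injective x →
        ∀ S : Finset (Fin N), S.card = m * n →
          (∃ D : ({i : Fin N // i ∈ S} → Matrix (Fin p) (Fin u) F) →
                 Matrix (Fin m × Fin p) (Fin n × Fin u) F,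
            ∀ (A : Matrix (Fin s) (Fin m × Fin p) F) (B : Matrix (Fin s) (Fin n × Fin u) F),
              D (fun i =>
                  (∑ j : Fin m, x i.1 ^ (j : ℕ) • A.submatrix id (fun a => (j, a)))ᵀ *
                  (∑ k : Fin n, x i.1 ^ ((k : ℕ) * m) • B.submatrix id (fun b => (k, b))))
                = Aᵀ * B)
          ∧ S.card * (p * u) = (m * p) * (n * u)) :=
  communication_load_optimal_general hs
end

section
/- Let F be a field, V an F-vector space, N ≥ mn positive integers, and x_0,…,x_{N−1} pairwise distinct elements of F; for c : {0,…,mn−1} → V let w(c) = (Σ_{j<mn} c_j x_i^j)_{i<N} ∈ V^N. If y ∈ V^N and c, c' are coefficient families such that both w(c) and w(c') are within Hamming distance ⌊(N − mn)/2⌋ of y, then c = c'. That is, the polynomial code can correct up to ⌊(N − mn)/2⌋ erroneous worker outputs: the true coefficients (and hence A^T B) are uniquely determined by any received word with at most ⌊(N − mn)/2⌋ errors. -/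
open BigOperators

/-- the polynomial code corrects up to `⌊(N - mn)/2⌋` errors: if the
codewords of two coefficient families `c, c'` are both within Hamming distance
`⌊(N - mn)/2⌋` of a received word `y`, then `c = c'`. -/
theorem polynomial_code_error_correction {F V : Type*} [Field F]
    [AddCommGroup V] [Module F V] [DecidableEq V]
    {m n N : ℕ} (hm : 0 < m) (hn : 0 < n) (hN : m * n ≤ N)
    (x : Fin N → F) (hx : Function.Injective x)
    (y : Fin N → V) (c c' : Fin (m * n) → V)
    (h : hammingDist (fun i : Fin N => ∑ j : Fin (m * n), x i ^ (j : ℕ) • c j) y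
          ≤ (N - m * n) / 2)
    (h' : hammingDist (fun i : Fin N => ∑ j : Fin (m * n), x i ^ (j : ℕ) • c' j) y
          ≤ (N - m * n) / 2) :
    c = c' := by
  classical
  set f := fun i : Fin N => ∑ j : Fin (m * n), x i ^ (j : ℕ) • c j with hf
  set g := fun i : Fin N => ∑ j : Fin (m * n), x i ^ (j : ℕ) • c' j with hg
  have hfg : hammingDist f g ≤ N - m * n := by
    calc hammingDist f g ≤ hammingDist f y + hammingDist y g := hammingDist_triangle f y g
      _ ≤ (N - m * n) / 2 + (N - m * n) / 2 := by
          rw [hammingDist_comm y g]; exact add_le_add h h'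
      _ ≤ N - m * n := by omega
  -- agreement set
  have hcard : m * n ≤ (Finset.univ.filter fun i => f i = g i).card := by
    have h1 : hammingDist f g = (Finset.univ.filter fun i => f i ≠ g i).card := rfl
    have h2 := Finset.card_filter_add_card_filter_not
      (s := (Finset.univ : Finset (Fin N))) (p := fun i => f i = g i)
    simp only [Finset.card_univ, Fintype.card_fin] at h2
    simp only [ne_eq] at h1
    omega
  obtain ⟨t, hts, ht⟩ := Finset.exists_subset_card_eq hcard
  let ι := t.orderEmbOfFin ht
  have hagr : ∀ k, f (ι k) = g (ι k) := by
    intro k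
    have := hts (t.orderEmbOfFin_mem ht k)
    simpa using this
  set d := fun j => c j - c' j with hd
  set M := Matrix.vandermonde (fun k => x (ι k)) with hM
  have hdet : IsUnit M.det := by
    rw [hM, Matrix.det_vandermonde]
    apply IsUnit.mk0
    apply Finset.prod_ne_zero_iff.2
    intro i _
    apply Finset.prod_ne_zero_iff.2
    intro j hj
    have hij : i ≠ j := fun e => by simp [e] at hj
    exact sub_ne_zero_of_ne fun e => hij (ι.injective (hx e)).symm
  have hinv : M⁻¹ * M = 1 := Matrix.nonsing_inv_mul M hdet
  have key : ∀ k, ∑ j, M k j • d j = 0 := by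
    intro k
    have := hagr k
    simp only [hf, hg] at this
    have : (∑ j : Fin (m * n), x (ι k) ^ (j : ℕ) • c j)
        - ∑ j : Fin (m * n), x (ι k) ^ (j : ℕ) • c' j = 0 := sub_eq_zero_of_eq this
    rw [← Finset.sum_sub_distrib] at this
    simpa [hM, Matrix.vandermonde, hd, smul_sub] using this
  have hzero : ∀ l, d l = 0 := by
    intro l
    have e1 : d l = ∑ j, ((M⁻¹ * M) l j) • d j := by
      rw [hinv]
      simp [Matrix.one_apply, ite_smul]
    rw [e1]
    have e2 : ∑ j, ((M⁻¹ * M) l j) • d j = ∑ k, (M⁻¹ l k) • ∑ j, M k j • d j := by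
      simp only [Matrix.mul_apply, Finset.sum_smul, smul_smul, Finset.smul_sum]
      exact Finset.sum_comm
    rw [e2]
    simp [key]
  funext j
  have := hzero j
  rw [hd] at this
  simpa [sub_eq_zero] using this
end

section
/- Let F be a field, n ∣ N, m ≤ N/n, and suppose F has at least N/n elements. Consider the 1D MDS code: partition the N workers into n groups G_0,…,G_{n−1} of size N/n; within each group choose pairwise distinct evaluation points x_i ∈ F; a worker i in group ℓ stores Ã_i = Σ_{j=0}^{m−1} A_j x_i^j and B̃_i = B_ℓ, and returns C̃_i = Ã_i^T B_ℓ. Then this computation strategy is (N − N/n + m)-recoverable: for every subset S of workers with |S| = N − N/n + m, S contains at least m workers of each group G_ℓ, and the results of any m workers within group ℓ determine all products A_j^T B_ℓ for j = 0,…,m−1; hence there exists a decoding function D_S with D_S((C̃_i)_{i∈S}) = A^T B for all inputs A, B. -/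
open Matrix BigOperators

/-- the 1D MDS code is `(N - N/n + m)`-recoverable. The `N = n·d`
workers are indexed by `Fin n × Fin d` (group `ℓ` is `{ℓ} × Fin d`, `d = N/n`);
worker `(ℓ, i)` stores `Ãᵢ = Σⱼ Aⱼ xℓᵢʲ` and `B̃ = B_ℓ` and returns `Ãᵢᵀ B_ℓ`, where
the evaluation points are pairwise distinct within each group. Every subset `S` with
`|S| = n·d - d + m` contains at least `m` workers from each group, and there is a
decoding function recovering all products `Aⱼᵀ B_ℓ` (hence `Aᵀ B`) from `(C̃ᵢ)_{i∈S}`. -/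
theorem oneD_MDS_code_recoverable {F : Type*} [Field F] {s p u m n d : ℕ}
    (hm : 0 < m) (hn : 0 < n) (hmd : m ≤ d)
    (x : Fin n → Fin d → F) (hx : ∀ ℓ : Fin n, Function.Injective (x ℓ)) :
    ∀ S : Finset (Fin n × Fin d), S.card = n * d - d + m →
      (∀ ℓ : Fin n, m ≤ (S.filter (fun w => w.1 = ℓ)).card)
      ∧
      ∃ D : ({w : Fin n × Fin d // w ∈ S} → Matrix (Fin p) (Fin u) F) →
            (Fin m → Fin n → Matrix (Fin p) (Fin u) F),
        ∀ (A : Fin m → Matrix (Fin s) (Fin p) F) (B : Fin n → Matrix (Fin s) (Fin u) F),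
          D (fun w => (∑ j : Fin m, x w.1.1 w.1.2 ^ (j : ℕ) • A j)ᵀ * B w.1.1)
            = fun j ℓ => (A j)ᵀ * B ℓ := by
  intro S hS
  classical
  have hdn : d ≤ n * d := Nat.le_mul_of_pos_left d hn
  -- cardinality of each group
  have hG : ∀ ℓ : Fin n,
      (Finset.univ.filter (fun w : Fin n × Fin d => w.1 = ℓ)).card = d := by
    intro ℓ
    have : (Finset.univ.filter (fun w : Fin n × Fin d => w.1 = ℓ))
        = {ℓ} ×ˢ Finset.univ := by
      ext w
      simp only [Finset.mem_filter, Finset.mem_univ, true_and, Finset.mem_product,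
        Finset.mem_singleton, and_true]
    rw [this, Finset.card_product]
    simp
  have key : ∀ ℓ : Fin n, m ≤ (S.filter (fun w => w.1 = ℓ)).card := by
    intro ℓ
    set G := Finset.univ.filter (fun w : Fin n × Fin d => w.1 = ℓ) with hGdef
    have h1 : S.filter (fun w => w.1 = ℓ) = G ∩ S := by
      ext w; simp [hGdef, and_comm]
    have h2 : (G \ S).card ≤ (Finset.univ \ S).card :=
      Finset.card_le_card (Finset.sdiff_subset_sdiff (Finset.subset_univ G) le_rfl)
    have h4 : (G ∩ S).card + (G \ S).card = G.card :=
      Finset.card_inter_add_card_sdiff G S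
    have h5 : G.card = d := hG ℓ
    have h6 := Finset.card_sdiff_add_card_eq_card (Finset.subset_univ S)
    rw [Finset.card_univ] at h6
    simp only [Fintype.card_prod, Fintype.card_fin] at h6
    rw [h1]
    omega
  refine ⟨key, ?_⟩
  -- choose m workers in each group
  have hsel : ∀ ℓ : Fin n, ∃ T ⊆ S.filter (fun w => w.1 = ℓ), T.card = m :=
    fun ℓ => Finset.exists_subset_card_eq (key ℓ)
  choose T hT hTcard using hsel
  set e : ∀ ℓ : Fin n, Fin m → Fin n × Fin d :=
    fun ℓ i => ((T ℓ).equivFin.symm (Fin.cast (hTcard ℓ).symm i) : Fin n × Fin d) with he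
  have hmemT : ∀ ℓ i, e ℓ i ∈ T ℓ := fun ℓ i =>
    ((T ℓ).equivFin.symm (Fin.cast (hTcard ℓ).symm i)).2
  have hinj : ∀ ℓ : Fin n, Function.Injective (e ℓ) := by
    intro ℓ i i' h
    have := (T ℓ).equivFin.symm.injective (Subtype.ext h)
    exact Fin.cast_injective _ this
  have hmemS : ∀ ℓ i, e ℓ i ∈ S := fun ℓ i =>
    (Finset.mem_filter.mp (hT ℓ (hmemT ℓ i))).1
  have hfst : ∀ ℓ i, (e ℓ i).1 = ℓ := fun ℓ i =>
    (Finset.mem_filter.mp (hT ℓ (hmemT ℓ i))).2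
  -- the evaluation-point vectors are injective
  have hv : ∀ ℓ : Fin n, Function.Injective (fun i => x ℓ (e ℓ i).2) := by
    intro ℓ i i' h
    have h2 : (e ℓ i).2 = (e ℓ i').2 := hx ℓ h
    have h1 : (e ℓ i).1 = (e ℓ i').1 := by rw [hfst ℓ i, hfst ℓ i']
    exact hinj ℓ (Prod.ext h1 h2)
  set V : Fin n → Matrix (Fin m) (Fin m) F :=
    fun ℓ => Matrix.vandermonde (fun i => x ℓ (e ℓ i).2) with hV
  have hdet : ∀ ℓ, IsUnit (V ℓ).det := by
    intro ℓ
    rw [hV]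
    simp only [Matrix.det_vandermonde]
    rw [isUnit_iff_ne_zero]
    apply Finset.prod_ne_zero_iff.mpr
    intro i _
    apply Finset.prod_ne_zero_iff.mpr
    intro j hj
    have hij : i ≠ j := (Finset.mem_Ioi.mp hj).ne
    exact sub_ne_zero_of_ne fun h => hij (hv ℓ h.symm)
  refine ⟨fun C j ℓ => ∑ i : Fin m, (V ℓ)⁻¹ j i • C ⟨e ℓ i, hmemS ℓ i⟩, ?_⟩
  intro A B
  funext j ℓ
  have hC : ∀ i : Fin m,
      (∑ k : Fin m, x (e ℓ i).1 (e ℓ i).2 ^ (k : ℕ) • A k)ᵀ * B (e ℓ i).1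
        = ∑ k : Fin m, V ℓ i k • ((A k)ᵀ * B ℓ) := by
    intro i
    rw [hfst ℓ i, Matrix.transpose_sum, Matrix.sum_mul]
    refine Finset.sum_congr rfl fun k _ => ?_
    rw [Matrix.transpose_smul, Matrix.smul_mul]
    simp [hV, Matrix.vandermonde]
  have step : (∑ i : Fin m, (V ℓ)⁻¹ j i •
      ((∑ k : Fin m, x (e ℓ i).1 (e ℓ i).2 ^ (k : ℕ) • A k)ᵀ * B (e ℓ i).1))
      = ∑ i : Fin m, (V ℓ)⁻¹ j i • ∑ k : Fin m, V ℓ i k • ((A k)ᵀ * B ℓ) :=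
    Finset.sum_congr rfl fun i _ => by rw [hC i]
  show (∑ i : Fin m, (V ℓ)⁻¹ j i •
      ((∑ k : Fin m, x (e ℓ i).1 (e ℓ i).2 ^ (k : ℕ) • A k)ᵀ * B (e ℓ i).1))
      = (A j)ᵀ * B ℓ
  rw [step]
  have hinv : (V ℓ)⁻¹ * V ℓ = 1 := Matrix.nonsing_inv_mul _ (hdet ℓ)
  calc ∑ i : Fin m, (V ℓ)⁻¹ j i • ∑ k : Fin m, V ℓ i k • ((A k)ᵀ * B ℓ)
      = ∑ k : Fin m, ((V ℓ)⁻¹ * V ℓ) j k • ((A k)ᵀ * B ℓ) := by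
        simp only [Finset.smul_sum, smul_smul, Matrix.mul_apply, Finset.sum_smul]
        rw [Finset.sum_comm]
    _ = (A j)ᵀ * B ℓ := by
        rw [hinv]
        simp [Matrix.one_apply, ite_smul, Finset.sum_ite_eq]
end

section
/- Consider distributed convolution with the variation of the polynomial code: given pairwise distinct x_0,…,x_{N−1} ∈ F with N ≥ m + n − 1, worker i stores the polynomials ã_i = Σ_{j=0}^{m−1} a_j x_i^j and b̃_i = Σ_{k=0}^{n−1} b_k x_i^k (each of degree < s) and returns the product ã_i · b̃_i. Then this strategy is (m+n−1)-recoverable: for every subset S ⊆ {0,…,N−1} with |S| = m + n − 1 there is a decoding function D_S such that D_S((ã_i · b̃_i)_{i∈S}) = a(y)·b(y) for all inputs. Equivalently, whenever two input block families produce equal products ã_i·b̃_i for all i ∈ S, the combined coefficients h_d = Σ_{j+k=d} a_j·b_k agree for all d = 0,…,m+n−2, and hence the convolutions a(y)·b(y) = Σ_{d=0}^{m+n−2} h_d(y)·y^(d·s) agree. -/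
open Polynomial BigOperators

/-- Theorem 4: the variation of the polynomial code for distributed
convolution is `(m + n - 1)`-recoverable. Blocks are polynomials of degree `< s`,
worker `i` stores `ãᵢ = Σⱼ aⱼ xᵢʲ` and `b̃ᵢ = Σₖ bₖ xᵢᵏ` and returns `ãᵢ · b̃ᵢ`; from
any `m + n - 1` worker results the master can decode the convolution
`a(y)·b(y) = (Σⱼ aⱼ y^(js)) · (Σₖ bₖ y^(ks))`. -/
theorem conv_polynomial_code_recoverable {F : Type*} [Field F] {s m n N : ℕ}
    (hs : 0 < s) (hm : 0 < m) (hn : 0 < n) (hN : m + n - 1 ≤ N)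
    (x : Fin N → F) (hx : Function.Injective x) :
    ∀ S : Finset (Fin N), S.card = m + n - 1 →
      ∃ D : ({i : Fin N // i ∈ S} → F[X]) → F[X],
        ∀ (a : Fin m → F[X]) (b : Fin n → F[X]),
          (∀ j, (a j).degree < (s : WithBot ℕ)) →
          (∀ k, (b k).degree < (s : WithBot ℕ)) →
          D (fun i => (∑ j : Fin m, x i.1 ^ (j : ℕ) • a j) *
                      (∑ k : Fin n, x i.1 ^ (k : ℕ) • b k))
            = (∑ j : Fin m, a j * X ^ ((j : ℕ) * s)) *
              (∑ k : Fin n, b k * X ^ ((k : ℕ) * s)) := by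
  intro S hS
  classical
  set K := m + n - 1 with hKdef
  let e : Fin K ≃ {i : Fin N // i ∈ S} := ((S.equivFin).trans (finCongr hS)).symm
  let y : Fin K → F := fun t => x (e t).1
  have hy : Function.Injective y := fun t t' h =>
    e.injective (Subtype.val_injective (hx h))
  set V := Matrix.vandermonde y with hVdef
  have hV : IsUnit V.det := by
    rw [isUnit_iff_ne_zero, Matrix.det_vandermonde_ne_zero_iff]
    exact hy
  refine ⟨fun v => ∑ d : Fin K, (∑ t : Fin K, V⁻¹ d t • v (e t)) * X ^ ((d : ℕ) * s), ?_⟩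
  intro a b _ _
  set H : Fin K → F[X] :=
    fun d => ∑ j : Fin m, ∑ k : Fin n,
      if (j : ℕ) + (k : ℕ) = (d : ℕ) then a j * b k else 0 with hH
  have key : ∀ g : ℕ → F[X],
      (∑ d : Fin K, H d * g (d : ℕ))
        = ∑ j : Fin m, ∑ k : Fin n, (a j * b k) * g ((j : ℕ) + (k : ℕ)) := by
    intro g
    have single : ∀ (j : Fin m) (k : Fin n),
        (∑ d : Fin K, if (j : ℕ) + (k : ℕ) = (d : ℕ) then (a j * b k) * g (d : ℕ) else 0)
          = (a j * b k) * g ((j : ℕ) + (k : ℕ)) := by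
      intro j k
      have hlt : (j : ℕ) + (k : ℕ) < K := by
        have := j.isLt; have := k.isLt; omega
      rw [Finset.sum_eq_single (⟨(j : ℕ) + (k : ℕ), hlt⟩ : Fin K)]
      · simp
      · intro d _ hd
        rw [if_neg]
        intro h
        exact hd (Fin.ext h.symm)
      · simp
    simp only [hH, Finset.sum_mul, ite_mul, zero_mul]
    rw [Finset.sum_comm]
    refine Finset.sum_congr rfl fun j _ => ?_
    rw [Finset.sum_comm]
    exact Finset.sum_congr rfl fun k _ => single j k
  have hw : ∀ t : Fin K,
      (∑ j : Fin m, x (e t).1 ^ (j : ℕ) • a j) * (∑ k : Fin n, x (e t).1 ^ (k : ℕ) • b k)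
        = ∑ d : Fin K, V t d • H d := by
    intro t
    have step1 : (∑ j : Fin m, x (e t).1 ^ (j : ℕ) • a j) *
        (∑ k : Fin n, x (e t).1 ^ (k : ℕ) • b k)
        = ∑ j : Fin m, ∑ k : Fin n, (a j * b k) * C (y t ^ ((j : ℕ) + (k : ℕ))) := by
      rw [Finset.sum_mul_sum]
      refine Finset.sum_congr rfl fun j _ => Finset.sum_congr rfl fun k _ => ?_
      show (y t ^ (j : ℕ) • a j) * (y t ^ (k : ℕ) • b k) = _
      simp only [Algebra.smul_def, algebraMap_eq, pow_add, map_mul]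
      ring
    rw [step1, ← key (fun d => C (y t ^ d))]
    refine Finset.sum_congr rfl fun d _ => ?_
    simp only [hVdef, Matrix.vandermonde, Matrix.of_apply, Algebra.smul_def, algebraMap_eq]
    ring
  have hinv : V⁻¹ * V = 1 := Matrix.nonsing_inv_mul V hV
  have hdec : ∀ d : Fin K,
      (∑ t : Fin K, V⁻¹ d t • ∑ d' : Fin K, V t d' • H d') = H d := by
    intro d
    have step : ∀ t : Fin K, V⁻¹ d t • ∑ d' : Fin K, V t d' • H d'
        = ∑ d' : Fin K, (V⁻¹ d t * V t d') • H d' := by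
      intro t
      rw [Finset.smul_sum]
      exact Finset.sum_congr rfl fun d' _ => (smul_smul _ _ _)
    simp_rw [step]
    rw [Finset.sum_comm]
    have step2 : ∀ d' : Fin K, (∑ t : Fin K, (V⁻¹ d t * V t d') • H d')
        = ((V⁻¹ * V) d d') • H d' := by
      intro d'
      rw [Matrix.mul_apply, Finset.sum_smul]
    simp_rw [step2, hinv, Matrix.one_apply]
    simp [ite_smul, Finset.sum_ite_eq]
  calc (∑ d : Fin K, (∑ t : Fin K,
          V⁻¹ d t • ((∑ j : Fin m, x (e t).1 ^ (j : ℕ) • a j) *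
            (∑ k : Fin n, x (e t).1 ^ (k : ℕ) • b k))) * X ^ ((d : ℕ) * s))
      = ∑ d : Fin K, H d * X ^ ((d : ℕ) * s) := by
        refine Finset.sum_congr rfl fun d _ => ?_
        congr 1
        rw [← hdec d]
        exact Finset.sum_congr rfl fun t _ => by rw [hw t]
    _ = ∑ j : Fin m, ∑ k : Fin n, (a j * b k) * X ^ (((j : ℕ) + (k : ℕ)) * s) :=
        key (fun d => X ^ (d * s))
    _ = (∑ j : Fin m, a j * X ^ ((j : ℕ) * s)) * (∑ k : Fin n, b k * X ^ ((k : ℕ) * s)) := by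
        rw [Finset.sum_mul_sum]
        refine Finset.sum_congr rfl fun j _ => Finset.sum_congr rfl fun k _ => ?_
        rw [add_mul, pow_add]
        ring
end

section
/- Consider distributed convolution with the (1,m)-polynomial code: given pairwise distinct x_0,…,x_{N−1} ∈ F with N ≥ mn, worker i stores ã_i = Σ_{j=0}^{m−1} a_j x_i^j and b̃_i = Σ_{k=0}^{n−1} b_k x_i^(k·m) and returns ã_i · b̃_i. Then for every subset S with |S| = mn, the outputs (ã_i·b̃_i)_{i∈S} determine every individual intermediate product a_j·b_k (0 ≤ j < m, 0 ≤ k < n), and hence determine the convolution a(y)·b(y); i.e., this strategy is mn-recoverable. This strictly improves the recovery threshold N − N/n + m of the coded convolution scheme of prior work whenever mn < N − N/n + m. -/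
open Polynomial BigOperators

/-- applying the (1,m)-polynomial code to distributed convolution,
where worker `i` stores `ãᵢ = Σⱼ aⱼ xᵢʲ` and `b̃ᵢ = Σₖ bₖ xᵢ^(km)` and returns
`ãᵢ · b̃ᵢ`, the outputs of any `mn` workers determine every intermediate product
`aⱼ · bₖ`, and hence the convolution `a(y)·b(y)`; i.e. the strategy is
`mn`-recoverable. -/
theorem conv_naive_polynomial_code_recoverable {F : Type*} [Field F] {s m n N : ℕ}
    (hs : 0 < s) (hm : 0 < m) (hn : 0 < n) (hN : m * n ≤ N)
    (x : Fin N → F) (hx : Function.Injective x) :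
    ∀ S : Finset (Fin N), S.card = m * n →
      (∃ D : ({i : Fin N // i ∈ S} → F[X]) → (Fin m → Fin n → F[X]),
        ∀ (a : Fin m → F[X]) (b : Fin n → F[X]),
          (∀ j, (a j).degree < (s : WithBot ℕ)) →
          (∀ k, (b k).degree < (s : WithBot ℕ)) →
          D (fun i => (∑ j : Fin m, x i.1 ^ (j : ℕ) • a j) *
                      (∑ k : Fin n, x i.1 ^ ((k : ℕ) * m) • b k))
            = fun j k => a j * b k)
      ∧
      (∃ D' : ({i : Fin N // i ∈ S} → F[X]) → F[X],
        ∀ (a : Fin m → F[X]) (b : Fin n → F[X]),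
          (∀ j, (a j).degree < (s : WithBot ℕ)) →
          (∀ k, (b k).degree < (s : WithBot ℕ)) →
          D' (fun i => (∑ j : Fin m, x i.1 ^ (j : ℕ) • a j) *
                       (∑ k : Fin n, x i.1 ^ ((k : ℕ) * m) • b k))
            = (∑ j : Fin m, a j * X ^ ((j : ℕ) * s)) *
              (∑ k : Fin n, b k * X ^ ((k : ℕ) * s))) := by
  intro S hS
  -- index equivalences
  let e : {i : Fin N // i ∈ S} ≃ Fin (m * n) := S.equivFin.trans (finCongr hS)
  let π : Fin m × Fin n ≃ Fin (m * n) :=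
    (Equiv.prodComm _ _).trans (finProdFinEquiv.trans (finCongr (Nat.mul_comm n m)))
  have hπ : ∀ p : Fin m × Fin n, ((π p : ℕ)) = (p.1 : ℕ) + (p.2 : ℕ) * m := by
    intro p
    simp [π, finProdFinEquiv, Nat.mul_comm]
  -- the evaluation points of the chosen workers
  set y : Fin (m * n) → F := fun t => x (e.symm t : Fin N) with hy_def
  have hy : Function.Injective y := by
    intro t t' h
    exact e.symm.injective (Subtype.coe_injective (hx h))
  set V : Matrix (Fin (m * n)) (Fin (m * n)) F := Matrix.vandermonde y with hV_def
  have hVdet : IsUnit V.det :=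
    isUnit_iff_ne_zero.mpr (Matrix.det_vandermonde_ne_zero_iff.mpr hy)
  have hWV : V⁻¹ * V = 1 := Matrix.nonsing_inv_mul V hVdet
  -- the decoder
  set D : ({i : Fin N // i ∈ S} → F[X]) → (Fin m → Fin n → F[X]) :=
    fun w j k => ∑ i : {i : Fin N // i ∈ S}, V⁻¹ (π (j, k)) (e i) • w i with hD_def
  have hD : ∀ (a : Fin m → F[X]) (b : Fin n → F[X]),
      D (fun i => (∑ j : Fin m, x i.1 ^ (j : ℕ) • a j) *
                  (∑ k : Fin n, x i.1 ^ ((k : ℕ) * m) • b k))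
        = fun j k => a j * b k := by
    intro a b
    set c : Fin (m * n) → F[X] := fun t => a (π.symm t).1 * b (π.symm t).2 with hc_def
    have hw : ∀ i : {i : Fin N // i ∈ S},
        (∑ j : Fin m, x i.1 ^ (j : ℕ) • a j) * (∑ k : Fin n, x i.1 ^ ((k : ℕ) * m) • b k)
          = ∑ t : Fin (m * n), V (e i) t • c t := by
      intro i
      rw [← Equiv.sum_comp π (fun t => V (e i) t • c t)]
      have : ∀ p : Fin m × Fin n, V (e i) (π p) • c (π p)
          = (x i.1 ^ (p.1 : ℕ) • a p.1) * (x i.1 ^ ((p.2 : ℕ) * m) • b p.2) := by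
        intro p
        rw [smul_mul_smul_comm, ← pow_add]
        have hV1 : V (e i) (π p) = x i.1 ^ ((p.1 : ℕ) + (p.2 : ℕ) * m) := by
          simp only [hV_def, Matrix.vandermonde_apply, hy_def, Equiv.symm_apply_apply, hπ p]
        rw [hV1]
        simp only [hc_def, Equiv.symm_apply_apply]
      simp_rw [this]
      rw [Finset.sum_mul_sum]
      exact (Fintype.sum_prod_type' _).symm
    funext j k
    simp only [hD_def]
    calc
      ∑ i : {i : Fin N // i ∈ S}, V⁻¹ (π (j, k)) (e i) •
          ((∑ j : Fin m, x i.1 ^ (j : ℕ) • a j) * (∑ k : Fin n, x i.1 ^ ((k : ℕ) * m) • b k))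
        = ∑ i : {i : Fin N // i ∈ S}, ∑ t : Fin (m * n),
            (V⁻¹ (π (j, k)) (e i) * V (e i) t) • c t := by
          refine Finset.sum_congr rfl fun i _ => ?_
          rw [hw i, Finset.smul_sum]
          exact Finset.sum_congr rfl fun t _ => smul_smul _ _ _
      _ = ∑ t : Fin (m * n), (∑ u : Fin (m * n), V⁻¹ (π (j, k)) u * V u t) • c t := by
          rw [Finset.sum_comm]
          refine Finset.sum_congr rfl fun t _ => ?_
          rw [← Finset.sum_smul,
            ← Equiv.sum_comp e (fun u => V⁻¹ (π (j, k)) u * V u t)]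
      _ = ∑ t : Fin (m * n), ((1 : Matrix (Fin (m * n)) (Fin (m * n)) F) (π (j, k)) t) • c t := by
          refine Finset.sum_congr rfl fun t _ => ?_
          rw [← Matrix.mul_apply, hWV]
      _ = c (π (j, k)) := by
          simp_rw [Matrix.one_apply, ite_smul, one_smul, zero_smul]
          simp
      _ = a j * b k := by simp [hc_def]
  refine ⟨⟨D, fun a b _ _ => hD a b⟩, ?_⟩
  refine ⟨fun w => ∑ j : Fin m, ∑ k : Fin n, D w j k * (X ^ ((j : ℕ) * s) * X ^ ((k : ℕ) * s)),
    fun a b ha hb => ?_⟩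
  beta_reduce
  rw [hD a b]
  rw [Finset.sum_mul_sum]
  refine Finset.sum_congr rfl fun j _ => Finset.sum_congr rfl fun k _ => ?_
  ring
end

section
/- Let F be a finite field with q ≥ 2 elements and s ≥ 1. For ANY convolution computation strategy, i.e., any families of functions f_i mapping the input a to a polynomial f_i(a) ∈ F[y] of degree < s and g_i mapping the input b to a polynomial g_i(b) ∈ F[y] of degree < s, and ANY subset S ⊆ {0,…,N−1} with |S| < max{m, n}, there is no function D such that D((f_i(a)·g_i(b))_{i∈S}) = a(y)·b(y) for all inputs a, b. Consequently, the optimum recovery threshold for distributed convolution satisfies K*_conv ≥ max{m, n}. -/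
/-!
Fix the second input to the unit block vector `(1, 0, …, 0)`, whose polynomial is `1`; a decoder
then recovers `a(y)` from the stored polynomials `fᵢ(a)`, `i ∈ S`, alone. These take at most
`q ^ (s |S|)` values, while the block inputs `a` number `q ^ (s m)` and `a ↦ a(y)` is injective on
them, so `|S| ≥ m` by pigeonhole. Symmetrically `|S| ≥ n`.
-/

open Polynomial

namespace Polynomial

instance finite_degreeLT {R : Type*} [Semiring R] [Finite R] (s : ℕ) : Finite (degreeLT R s) :=
  .of_equiv _ (degreeLTEquiv R s).toEquiv.symm

lemma nontrivial_degreeLT {R : Type*} [Semiring R] [Nontrivial R] {s : ℕ} (hs : 0 < s) :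
    Nontrivial (degreeLT R s) :=
  ⟨⟨⟨1, mem_degreeLT.2 (degree_one_le.trans_lt (by exact_mod_cast hs))⟩, 0,
    fun h => one_ne_zero (congrArg Subtype.val h)⟩⟩

end Polynomial

/-- The input `a(y) = ∑ⱼ aⱼ(y) y^(j s)` assembled from its blocks `aⱼ`. -/
noncomputable def blockSum {R : Type*} [Semiring R] (s : ℕ) {m : ℕ} (a : Fin m → R[X]) :
    R[X] :=
  ∑ j, a j * X ^ ((j : ℕ) * s)

section blockSum

variable {R : Type*} {s m : ℕ}

lemma blockSum_succ [Semiring R] (a : Fin (m + 1) → R[X]) :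
    blockSum s a = a 0 + X ^ s * blockSum s (Fin.tail a) := by
  simp only [blockSum, Fin.sum_univ_succ, Fin.val_zero, zero_mul, pow_zero, mul_one,
    Finset.mul_sum, Fin.val_succ, Fin.tail]
  congr 1
  refine Finset.sum_congr rfl fun j _ => ?_
  rw [← mul_assoc, X_pow_mul, mul_assoc, ← pow_add, add_one_mul, add_comm s]

lemma blockSum_single_zero_one [Semiring R] [NeZero m] :
    blockSum s (Pi.single 0 1 : Fin m → R[X]) = 1 := by
  simp [blockSum, Pi.single_apply]

lemma degree_single_zero_one_lt [Semiring R] [NeZero m] (hs : 0 < s) (j : Fin m) :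
    ((Pi.single 0 1 : Fin m → R[X]) j).degree < (s : WithBot ℕ) := by
  rcases eq_or_ne j 0 with rfl | hj
  · exact degree_one_le.trans_lt (by exact_mod_cast hs)
  · simp [hj, bot_lt_iff_ne_bot]

/-- Blocks of degree `< s` are recovered from `blockSum` by repeated division by `X ^ s`. -/
lemma blockSum_injective [Ring R] [Nontrivial R] :
    Function.Injective fun a : Fin m → degreeLT R s => blockSum s fun j => (a j : R[X]) := by
  induction m with
  | zero => exact Function.injective_of_subsingleton _
  | succ m ih =>
    intro a a' h
    have hdiv (b : Fin (m + 1) → degreeLT R s) :=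
      div_modByMonic_unique (blockSum s fun j => (Fin.tail b j : R[X])) (b 0 : R[X])
        (monic_X_pow s)
        ⟨(blockSum_succ (s := s) fun j => (b j : R[X])).symm,
          by simpa [degree_X_pow] using mem_degreeLT.1 (b 0).2⟩
    simp only at h
    obtain ⟨hquot, hrem⟩ := hdiv a
    obtain ⟨hquot', hrem'⟩ := hdiv a'
    rw [h] at hquot hrem
    have htail : Fin.tail a = Fin.tail a' := ih (hquot.symm.trans hquot')
    funext j
    exact Fin.cases (Subtype.ext (hrem.symm.trans hrem')) (fun j => congrFun htail j) j

end blockSum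

lemma card_fun_lt_card_fun {ι V : Type*} [Finite ι] [Finite V] [Nontrivial V] {m : ℕ}
    (hι : Nat.card ι < m) : Nat.card (ι → V) < Nat.card (Fin m → V) := by
  rw [Nat.card_fun, Nat.card_fun, Nat.card_fin]
  exact Nat.pow_lt_pow_right Finite.one_lt_card hι

section Converse

variable {R : Type*} [Ring R] [Finite R] [Nontrivial R] {s m n : ℕ} {ι : Type*} [Finite ι]

theorem not_exists_decoder_of_card_lt (hs : 0 < s) (hι : Nat.card ι < m)
    (φ : ι → (Fin m → R[X]) → R[X])
    (hφ : ∀ i a, (∀ j, (a j).degree < (s : WithBot ℕ)) →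
      (φ i a).degree < (s : WithBot ℕ)) :
    ¬ ∃ D : (ι → R[X]) → R[X],
      ∀ a : Fin m → R[X], (∀ j, (a j).degree < (s : WithBot ℕ)) →
        D (fun i => φ i a) = blockSum s a := by
  rintro ⟨D, hD⟩
  have := nontrivial_degreeLT (R := R) hs
  let Φ : (Fin m → degreeLT R s) → ι → degreeLT R s := fun a i =>
    ⟨φ i fun j => a j, mem_degreeLT.2 (hφ i _ fun j => mem_degreeLT.1 (a j).2)⟩
  have hΦ : Function.Injective Φ := fun a a' h => blockSum_injective <| by
    simp only
    rw [← hD _ fun j => mem_degreeLT.1 (a j).2, ← hD _ fun j => mem_degreeLT.1 (a' j).2]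
    exact congrArg D (funext fun i => congrArg Subtype.val (congrFun h i))
  exact (Nat.card_le_card_of_injective Φ hΦ).not_gt (card_fun_lt_card_fun hι)

theorem not_exists_mul_decoder_of_card_lt_max (hs : 0 < s) (hm : 0 < m) (hn : 0 < n)
    (hι : Nat.card ι < max m n)
    (f : ι → (Fin m → R[X]) → R[X]) (g : ι → (Fin n → R[X]) → R[X])
    (hf : ∀ i a, (∀ j, (a j).degree < (s : WithBot ℕ)) → (f i a).degree < (s : WithBot ℕ))
    (hg : ∀ i b, (∀ k, (b k).degree < (s : WithBot ℕ)) →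
      (g i b).degree < (s : WithBot ℕ)) :
    ¬ ∃ D : (ι → R[X]) → R[X], ∀ a b,
      (∀ j, (a j).degree < (s : WithBot ℕ)) → (∀ k, (b k).degree < (s : WithBot ℕ)) →
      D (fun i => f i a * g i b) = blockSum s a * blockSum s b := by
  have : NeZero m := ⟨hm.ne'⟩
  have : NeZero n := ⟨hn.ne'⟩
  rintro ⟨D, hD⟩
  rcases lt_max_iff.1 hι with hιm | hιn
  · refine not_exists_decoder_of_card_lt hs hιm f hf
      ⟨fun u => D fun i => u i * g i (Pi.single 0 1), fun a ha => ?_⟩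
    exact (hD a _ ha (degree_single_zero_one_lt hs)).trans
      (by rw [blockSum_single_zero_one, mul_one])
  · refine not_exists_decoder_of_card_lt hs hιn g hg
      ⟨fun u => D fun i => f i (Pi.single 0 1) * u i, fun b hb => ?_⟩
    exact (hD _ b (degree_single_zero_one_lt hs) hb).trans
      (by rw [blockSum_single_zero_one, one_mul])

end Converse

/-- converse for distributed convolution over a finite field. For any
convolution computation strategy (families `fᵢ, gᵢ` mapping the block inputs to
stored polynomials of degree `< s`) and any subset `S` of workers with
`|S| < max{m, n}`, no decoding function can recover the convolution `a(y)·b(y)` from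
the products `(fᵢ(a)·gᵢ(b))_{i∈S}`; consequently every `k`-recoverable strategy
satisfies `k ≥ max{m, n}`, i.e. `K*_conv ≥ max{m, n}`. -/
theorem conv_recovery_converse {F : Type*} [Field F] [Fintype F] {s m n N : ℕ}
    (hs : 0 < s) (hm : 0 < m) (hn : 0 < n)
    (f : Fin N → (Fin m → F[X]) → F[X]) (g : Fin N → (Fin n → F[X]) → F[X])
    (hf : ∀ (i : Fin N) (a : Fin m → F[X]),
      (∀ j, (a j).degree < (s : WithBot ℕ)) → (f i a).degree < (s : WithBot ℕ))
    (hg : ∀ (i : Fin N) (b : Fin n → F[X]),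
      (∀ k, (b k).degree < (s : WithBot ℕ)) → (g i b).degree < (s : WithBot ℕ)) :
    (∀ S : Finset (Fin N), S.card < max m n →
      ¬ ∃ D : ({i : Fin N // i ∈ S} → F[X]) → F[X],
          ∀ (a : Fin m → F[X]) (b : Fin n → F[X]),
            (∀ j, (a j).degree < (s : WithBot ℕ)) →
            (∀ k, (b k).degree < (s : WithBot ℕ)) →
            D (fun i => f i.1 a * g i.1 b)
              = (∑ j : Fin m, a j * X ^ ((j : ℕ) * s)) *
                (∑ k : Fin n, b k * X ^ ((k : ℕ) * s)))
    ∧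
    (∀ k : ℕ, k ≤ N →
      (∀ S : Finset (Fin N), S.card = k →
        ∃ D : ({i : Fin N // i ∈ S} → F[X]) → F[X],
          ∀ (a : Fin m → F[X]) (b : Fin n → F[X]),
            (∀ j, (a j).degree < (s : WithBot ℕ)) →
            (∀ k', (b k').degree < (s : WithBot ℕ)) →
            D (fun i => f i.1 a * g i.1 b)
              = (∑ j : Fin m, a j * X ^ ((j : ℕ) * s)) *
                (∑ k' : Fin n, b k' * X ^ ((k' : ℕ) * s))) →
      max m n ≤ k) := by
  have hconv (S : Finset (Fin N)) (hS : S.card < max m n) := not_exists_mul_decoder_of_card_lt_max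
    (ι := {i // i ∈ S}) hs hm hn (by rwa [Nat.card_eq_fintype_card, Fintype.card_coe])
    (fun i => f i.1) (fun i => g i.1) (fun i => hf i.1) (fun i => hg i.1)
  refine ⟨hconv, fun k hk hrec => ?_⟩
  by_contra! hlt
  obtain ⟨S, -, hS⟩ := (Finset.univ : Finset (Fin N)).exists_subset_card_eq (n := k)
    (by rwa [Finset.card_univ, Fintype.card_fin])
  exact hconv S (hS ▸ hlt) (hrec S hS)
end

section
/- Assume F is a finite field with q ≥ max(N, 2) elements, s ≥ 1, and N ≥ m + n − 1. Let K*_conv = min{ k : there exists a k-recoverable convolution computation strategy }. Then max{m, n} ≤ K*_conv ≤ m + n − 1, and in particular (m + n − 1)/2 < K*_conv ≤ m + n − 1; that is, the optimum recovery threshold for distributed convolution is characterized within a factor of 2 by the value m + n − 1 achieved by the variation of the polynomial code. -/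
open Polynomial BigOperators

/-!
Upper bound (polynomial code): worker `i` evaluates `A(z) = ∑ aⱼ zʲ` and `B(z) = ∑ bₖ zᵏ`,
polynomials in `z` over `F[X]`, at pairwise distinct points `xᵢ ∈ F`. Since `A * B` has degree
`< m + n - 1`, any `m + n - 1` of the products `A(xᵢ) B(xᵢ)` determine it, and
`a ∗ b = (A * B)(X ^ s)`.

Lower bound: with `b` the input whose only nonzero block is `1`, the `k` answers `fᵢ(a) gᵢ(b)`
still determine `a`, so `a ↦ (fᵢ(a))ᵢ` injects the `q ^ (s * m)` inputs into `q ^ (s * k)`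
outputs and `m ≤ k`; symmetrically `n ≤ k`.
-/

theorem degree_mul_lt_add_sub_one {R : Type*} [Semiring R] [NoZeroDivisors R] {p q : R[X]}
    {m n : ℕ} (hp : p.degree < m) (hq : q.degree < n) : (p * q).degree < (m + n - 1 : ℕ) := by
  rcases eq_or_ne p 0 with rfl | hp0
  · simp
  rcases eq_or_ne q 0 with rfl | hq0
  · simp
  rw [degree_eq_natDegree hp0, Nat.cast_lt] at hp
  rw [degree_eq_natDegree hq0, Nat.cast_lt] at hq
  rw [degree_eq_natDegree (mul_ne_zero hp0 hq0), natDegree_mul hp0 hq0, Nat.cast_lt]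
  omega

theorem exists_decoder_of_degree_lt {R ι : Type*} [CommRing R] [IsDomain R] (S : Finset ι)
    {v : ι → R} (hv : Set.InjOn v S) (y : R) :
    ∃ D : (S → R) → R, ∀ P : R[X], P.degree < S.card → D (fun i => P.eval (v i)) = P.eval y := by
  classical
  refine ⟨fun w => if h : ∃ Q : R[X], Q.degree < S.card ∧ ∀ i : S, Q.eval (v i) = w i
    then h.choose.eval y else 0, fun P hP => ?_⟩
  have h : ∃ Q : R[X], Q.degree < S.card ∧ ∀ i : S, Q.eval (v i) = P.eval (v i) :=
    ⟨P, hP, fun _ => rfl⟩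
  dsimp only
  rw [dif_pos h, eq_of_degrees_lt_of_eval_index_eq S hv h.choose_spec.1 hP
    fun i hi => h.choose_spec.2 ⟨i, hi⟩]

namespace ConvCode

variable {F : Type*} [Field F]

noncomputable def blockSum {μ : ℕ} (s : ℕ) (c : Fin μ → F[X]) : F[X] :=
  ∑ j : Fin μ, c j * X ^ ((j : ℕ) * s)

noncomputable def blockPoly {μ : ℕ} (c : Fin μ → F[X]) : Polynomial F[X] :=
  ∑ j : Fin μ, C (c j) * X ^ (j : ℕ)

/-- The set `K` of the main theorem is `{k | HasRecoverableStrategy F s m n N k}` up to unfolding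
`blockSum`. -/
def HasRecoverableStrategy (F : Type*) [Field F] (s m n N k : ℕ) : Prop :=
  ∃ (f : Fin N → (Fin m → F[X]) → F[X]) (g : Fin N → (Fin n → F[X]) → F[X]),
    (∀ (i : Fin N) (a : Fin m → F[X]),
      (∀ j, (a j).degree < (s : WithBot ℕ)) → (f i a).degree < (s : WithBot ℕ)) ∧
    (∀ (i : Fin N) (b : Fin n → F[X]),
      (∀ k', (b k').degree < (s : WithBot ℕ)) → (g i b).degree < (s : WithBot ℕ)) ∧
    (∀ S : Finset (Fin N), S.card = k →
      ∃ D : ({i : Fin N // i ∈ S} → F[X]) → F[X],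
        ∀ (a : Fin m → F[X]) (b : Fin n → F[X]),
          (∀ j, (a j).degree < (s : WithBot ℕ)) →
          (∀ k', (b k').degree < (s : WithBot ℕ)) →
          D (fun i => f i.1 a * g i.1 b) = blockSum s a * blockSum s b)

theorem coeff_blockSum {s μ : ℕ} {c : Fin μ → F[X]} (hc : ∀ j, (c j).degree < (s : WithBot ℕ))
    (j : Fin μ) {t : ℕ} (ht : t < s) :
    (blockSum s c).coeff ((j : ℕ) * s + t) = (c j).coeff t := by
  rw [blockSum, finsetSum_coeff, Finset.sum_eq_single j]
  · rw [add_comm, coeff_mul_X_pow]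
  · intro j' _ hj'
    rw [coeff_mul_X_pow']
    rcases lt_or_gt_of_ne (Fin.val_ne_of_ne hj') with hlt | hgt
    · have : (j' : ℕ) * s + s ≤ j * s := by simpa [add_one_mul] using Nat.mul_le_mul_right s hlt
      rw [if_pos (by omega)]
      refine coeff_eq_zero_of_degree_lt ((hc j').trans_le ?_)
      exact_mod_cast (by omega : s ≤ (j : ℕ) * s + t - j' * s)
    · have : (j : ℕ) * s + s ≤ j' * s := by simpa [add_one_mul] using Nat.mul_le_mul_right s hgt
      rw [if_neg (by omega)]
  · simp

theorem eq_of_blockSum_eq {s μ : ℕ} {c c' : Fin μ → F[X]}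
    (hc : ∀ j, (c j).degree < (s : WithBot ℕ)) (hc' : ∀ j, (c' j).degree < (s : WithBot ℕ))
    (h : blockSum s c = blockSum s c') : c = c' := by
  funext j
  ext t
  by_cases ht : t < s
  · rw [← coeff_blockSum hc j ht, ← coeff_blockSum hc' j ht, h]
  · have hst : (s : WithBot ℕ) ≤ t := by exact_mod_cast not_lt.1 ht
    rw [coeff_eq_zero_of_degree_lt ((hc j).trans_le hst),
      coeff_eq_zero_of_degree_lt ((hc' j).trans_le hst)]

theorem blockSum_single {s μ : ℕ} (j₀ : Fin μ) (p : F[X]) :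
    blockSum s (Pi.single j₀ p) = p * X ^ ((j₀ : ℕ) * s) := by
  simp [blockSum, Pi.single_apply]

theorem degree_single_one_lt {s μ : ℕ} (hs : 0 < s) (j₀ j : Fin μ) :
    ((Pi.single j₀ (1 : F[X]) : Fin μ → F[X]) j).degree < (s : WithBot ℕ) := by
  rcases eq_or_ne j j₀ with rfl | h
  · simpa using hs
  · simp [h]

theorem degree_eval_C_blockPoly_lt {s μ : ℕ} {c : Fin μ → F[X]}
    (hc : ∀ j, (c j).degree < (s : WithBot ℕ)) (z : F) :
    ((blockPoly c).eval (C z)).degree < (s : WithBot ℕ) := by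
  rw [← mem_degreeLT]
  simp only [blockPoly, eval_finsetSum, eval_mul, eval_C, eval_pow, eval_X]
  refine Submodule.sum_mem _ fun j _ => ?_
  rw [← C_pow, mul_comm, ← smul_eq_C_mul]
  exact Submodule.smul_mem _ _ (mem_degreeLT.2 (hc j))

theorem eval_X_pow_blockPoly {μ : ℕ} (s : ℕ) (c : Fin μ → F[X]) :
    (blockPoly c).eval (X ^ s) = blockSum s c := by
  simp only [blockPoly, blockSum, eval_finsetSum, eval_mul, eval_C, eval_pow, eval_X, ← pow_mul,
    mul_comm s]

theorem hasRecoverableStrategy_polyCode {s m n N : ℕ} (x : Fin N ↪ F) :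
    HasRecoverableStrategy F s m n N (m + n - 1) := by
  refine ⟨fun i a => (blockPoly a).eval (C (x i)), fun i b => (blockPoly b).eval (C (x i)),
    fun i _ ha => degree_eval_C_blockPoly_lt ha _, fun i _ hb => degree_eval_C_blockPoly_lt hb _,
    fun S hS => ?_⟩
  have hx : Set.InjOn (fun i => C (x i)) S := fun i _ j _ h => x.injective (C_injective h)
  obtain ⟨D, hD⟩ := exists_decoder_of_degree_lt S hx (X ^ s)
  refine ⟨D, fun a b _ _ => ?_⟩
  have hdeg : (blockPoly a * blockPoly b).degree < S.card :=
    hS ▸ degree_mul_lt_add_sub_one (degree_sum_fin_lt a) (degree_sum_fin_lt b)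
  simpa only [eval_mul, eval_X_pow_blockPoly] using hD _ hdeg

section Counting

variable [Fintype F]

theorem card_le_card_of_injOn_degree_lt {s : ℕ} {κ ι : Type*} [Fintype κ] [Fintype ι]
    (hs : 0 < s) (hq : 2 ≤ Fintype.card F) (Φ : (κ → F[X]) → ι → F[X])
    (hΦ : ∀ a, (∀ j, (a j).degree < (s : WithBot ℕ)) → ∀ i, (Φ a i).degree < (s : WithBot ℕ))
    (hinj : ∀ a a', (∀ j, (a j).degree < (s : WithBot ℕ)) →
      (∀ j, (a' j).degree < (s : WithBot ℕ)) → Φ a = Φ a' → a = a') :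
    Fintype.card κ ≤ Fintype.card ι := by
  classical
  let e := degreeLTEquiv F s
  let dec : (κ → Fin s → F) → κ → F[X] := fun v j => e.symm (v j)
  have hdec : ∀ v j, (dec v j).degree < (s : WithBot ℕ) := fun v j =>
    mem_degreeLT.1 (e.symm (v j)).2
  let enc : (κ → Fin s → F) → ι → Fin s → F := fun v i =>
    e ⟨Φ (dec v) i, mem_degreeLT.2 (hΦ _ (hdec v) i)⟩
  have henc : Function.Injective enc := by
    intro v v' h
    have hΦeq : Φ (dec v) = Φ (dec v') :=
      funext fun i => congrArg Subtype.val (e.injective (congrFun h i))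
    funext j
    exact e.symm.injective (Subtype.ext (congrFun (hinj _ _ (hdec v) (hdec v') hΦeq) j))
  have hcard := Fintype.card_le_of_injective enc henc
  simp only [Fintype.card_fun, Fintype.card_fin] at hcard
  exact (Nat.pow_le_pow_iff_right (Nat.one_lt_pow hs.ne' hq)).1 hcard

theorem le_card_of_recovers_blockSum {s μ : ℕ} {ι : Type*} [Fintype ι]
    (hs : 0 < s) (hq : 2 ≤ Fintype.card F) (φ : ι → (Fin μ → F[X]) → F[X])
    (hφ : ∀ i a, (∀ j, (a j).degree < (s : WithBot ℕ)) → (φ i a).degree < (s : WithBot ℕ))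
    (D : (ι → F[X]) → F[X])
    (hD : ∀ a, (∀ j, (a j).degree < (s : WithBot ℕ)) → D (fun i => φ i a) = blockSum s a) :
    μ ≤ Fintype.card ι := by
  simpa using card_le_card_of_injOn_degree_lt hs hq (fun a i => φ i a)
    (fun a ha i => hφ i a ha) fun a a' ha ha' h =>
      eq_of_blockSum_eq ha ha' ((hD a ha).symm.trans ((congrArg D h).trans (hD a' ha')))

theorem max_le_of_hasRecoverableStrategy {s m n N k : ℕ} (hs : 0 < s) (hm : 0 < m) (hn : 0 < n)
    (hq : 2 ≤ Fintype.card F) (hkN : k ≤ N) (h : HasRecoverableStrategy F s m n N k) :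
    max m n ≤ k := by
  obtain ⟨f, g, hf, hg, hrec⟩ := h
  obtain ⟨S, -, hS⟩ := Finset.exists_subset_card_eq
    (show k ≤ (Finset.univ : Finset (Fin N)).card by simpa using hkN)
  obtain ⟨D, hD⟩ := hrec S hS
  have ha₀ := degree_single_one_lt (F := F) hs (⟨0, hm⟩ : Fin m)
  have hb₀ := degree_single_one_lt (F := F) hs (⟨0, hn⟩ : Fin n)
  rw [← hS, ← Fintype.card_coe]
  refine max_le ?_ ?_
  · refine le_card_of_recovers_blockSum hs hq (fun i => f i) (fun i => hf i)
      (fun w => D fun i => w i * g i (Pi.single (⟨0, hn⟩ : Fin n) 1)) fun a ha => ?_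
    simpa [blockSum_single] using hD a _ ha hb₀
  · refine le_card_of_recovers_blockSum hs hq (fun i => g i) (fun i => hg i)
      (fun w => D fun i => f i (Pi.single (⟨0, hm⟩ : Fin m) 1) * w i) fun b hb => ?_
    simpa [blockSum_single] using hD _ b ha₀ hb

end Counting

end ConvCode

/-- Theorem 5: the optimum recovery threshold `K*_conv` for
distributed convolution (the minimum `k` for which some `k`-recoverable convolution
computation strategy exists) satisfies `max{m,n} ≤ K*_conv ≤ m + n - 1`, and in
particular `(m + n - 1)/2 < K*_conv ≤ m + n - 1`: it is characterized within a
factor of `2` by the value `m + n - 1` achieved by the variation of the polynomial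
code. -/
theorem conv_optimum_threshold_within_factor_two {F : Type*} [Field F] [Fintype F]
    {s m n N : ℕ}
    (hs : 0 < s) (hm : 0 < m) (hn : 0 < n) (hN : m + n - 1 ≤ N)
    (hq : max N 2 ≤ Fintype.card F) :
    let K : Set ℕ := {k : ℕ |
      ∃ (f : Fin N → (Fin m → F[X]) → F[X]) (g : Fin N → (Fin n → F[X]) → F[X]),
        (∀ (i : Fin N) (a : Fin m → F[X]),
          (∀ j, (a j).degree < (s : WithBot ℕ)) → (f i a).degree < (s : WithBot ℕ)) ∧
        (∀ (i : Fin N) (b : Fin n → F[X]),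
          (∀ k', (b k').degree < (s : WithBot ℕ)) → (g i b).degree < (s : WithBot ℕ)) ∧
        (∀ S : Finset (Fin N), S.card = k →
          ∃ D : ({i : Fin N // i ∈ S} → F[X]) → F[X],
            ∀ (a : Fin m → F[X]) (b : Fin n → F[X]),
              (∀ j, (a j).degree < (s : WithBot ℕ)) →
              (∀ k', (b k').degree < (s : WithBot ℕ)) →
              D (fun i => f i.1 a * g i.1 b)
                = (∑ j : Fin m, a j * X ^ ((j : ℕ) * s)) *
                  (∑ k' : Fin n, b k' * X ^ ((k' : ℕ) * s)))}
    max m n ≤ sInf K ∧ sInf K ≤ m + n - 1 ∧ (m + n - 1) / 2 < sInf K := by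
  intro K
  have hq2 : 2 ≤ Fintype.card F := (le_max_right N 2).trans hq
  obtain ⟨x⟩ : Nonempty (Fin N ↪ F) :=
    Function.Embedding.nonempty_of_card_le (by simpa using (le_max_left N 2).trans hq)
  have hmem : m + n - 1 ∈ K := ConvCode.hasRecoverableStrategy_polyCode x
  have hlow : ∀ k ∈ K, max m n ≤ k := fun k hk => by
    by_cases hkN : k ≤ N
    · exact ConvCode.max_le_of_hasRecoverableStrategy hs hm hn hq2 hkN hk
    · omega -- no `k`-subset of `Fin N` exists, so `k ∈ K` holds vacuously
  have hmax : max m n ≤ sInf K := le_csInf ⟨_, hmem⟩ hlow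
  exact ⟨hmax, Nat.sInf_le hmem, by omega⟩
end
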